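/- arXiv:1009.5388 — 9 statements merged into one kernel-verified Lean document; each statement's English description precedes it below -/
import Mathlib

section
/- Let f ∈ K[x] be separable with ordered roots a in a splitting field, T ≤ S_n a subgroup, F ∈ K[x_1,...,x_n] a T-invariant polynomial, and D = Tσ_0 G_a a double coset in S_n, where G_a is the Galois group as a subgroup of S_n. Then the polynomial Γ_{a,D}^F(X) = ∏_{σ ∈ T\D} (X − e_a^F(σ)) has all coefficients in K. -/
/-!
Every `K`-automorphism `g` of `L` permutes the roots, `g (a i) = a (π i)` with `π ∈ G_a`, and
so sends `e_a^F(σ)` to `e_a^F(σ π⁻¹)`. Right multiplication by `π⁻¹` permutes the right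
`T`-cosets inside `D = T σ₀ G_a`, and `e_a^F` is constant on these cosets, so `g` permutes the
linear factors of `Γ_{a,D}^F`. The coefficients are therefore fixed by the Galois group and lie
in `K`.
-/

open Polynomial

section DoubleCoset

variable {H : Type*} [Group H] {T G : Subgroup H} {σ₀ : H} {R : Finset H}

theorem eq_of_mem_of_eq_mul (hR1 : ∀ r ∈ R, ∃ t ∈ T, ∃ g ∈ G, r = t * σ₀ * g)
    (hR2 : ∀ t ∈ T, ∀ g ∈ G, ∃! r, r ∈ R ∧ ∃ t' ∈ T, t * σ₀ * g = t' * r)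
    {r₁ r₂ t : H} (h₁ : r₁ ∈ R) (h₂ : r₂ ∈ R) (ht : t ∈ T) (h : r₁ = t * r₂) : r₁ = r₂ := by
  obtain ⟨u, hu, g, hg, rfl⟩ := hR1 r₂ h₂
  obtain ⟨r, -, hr⟩ := hR2 u hu g hg
  rw [hr r₁ ⟨h₁, t⁻¹, inv_mem ht, by rw [h]; group⟩, hr _ ⟨h₂, 1, one_mem T, by group⟩]

theorem exists_mem_mul_eq_mul (hR1 : ∀ r ∈ R, ∃ t ∈ T, ∃ g ∈ G, r = t * σ₀ * g)
    (hR2 : ∀ t ∈ T, ∀ g ∈ G, ∃! r, r ∈ R ∧ ∃ t' ∈ T, t * σ₀ * g = t' * r)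
    {r g : H} (hr : r ∈ R) (hg : g ∈ G) : ∃ r' ∈ R, ∃ t ∈ T, r * g = t * r' := by
  obtain ⟨t, ht, g', hg', rfl⟩ := hR1 r hr
  obtain ⟨r', ⟨hr', t', ht', h⟩, -⟩ := hR2 t ht (g' * g) (mul_mem hg' hg)
  exact ⟨r', hr', t', ht', by rw [← h]; group⟩

theorem prod_mul_right_eq_prod (hR1 : ∀ r ∈ R, ∃ t ∈ T, ∃ g ∈ G, r = t * σ₀ * g)
    (hR2 : ∀ t ∈ T, ∀ g ∈ G, ∃! r, r ∈ R ∧ ∃ t' ∈ T, t * σ₀ * g = t' * r)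
    {M : Type*} [CommMonoid M] (u : H → M) (hu : ∀ t ∈ T, ∀ s, u (t * s) = u s)
    {g : H} (hg : g ∈ G) : ∏ r ∈ R, u (r * g) = ∏ r ∈ R, u r := by
  choose φ hφR t ht hφ using fun r (hr : r ∈ R) => exists_mem_mul_eq_mul hR1 hR2 hr hg
  refine Finset.prod_bij φ hφR (fun r₁ h₁ r₂ h₂ heq => ?_) (fun r hr => ?_)
    (fun r hr => by rw [hφ r hr, hu _ (ht r hr)])
  · refine eq_of_mem_of_eq_mul hR1 hR2 h₁ h₂
      (mul_mem (ht r₁ h₁) (inv_mem (ht r₂ h₂))) (mul_right_cancel (b := g) ?_)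
    rw [hφ r₁ h₁, heq, mul_assoc _ r₂, hφ r₂ h₂]
    group
  · obtain ⟨r', hr', s, hs, h⟩ := exists_mem_mul_eq_mul hR1 hR2 hr (inv_mem hg)
    refine ⟨r', hr', eq_of_mem_of_eq_mul hR1 hR2 (hφR r' hr') hr
      (mul_mem (inv_mem (ht r' hr')) (inv_mem hs)) ?_⟩
    have hr'g : r' * g = s⁻¹ * r := by
      rw [eq_inv_mul_iff_mul_eq, ← mul_assoc, ← h, inv_mul_cancel_right]
    rw [eq_inv_mul_iff_mul_eq.mpr (hφ r' hr').symm, hr'g, mul_assoc]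

end DoubleCoset

section Roots

variable {K L ι : Type*} [Field K] [Field L] [Algebra K L] [Fintype ι] {f : K[X]} {a : ι → L}

theorem exists_eq_of_aeval_eq_zero (hroots : f.map (algebraMap K L) = ∏ i, (X - C (a i)))
    {x : L} (hx : aeval x f = 0) : ∃ i, a i = x := by
  rw [aeval_def, eval₂_eq_eval_map, hroots, eval_prod, Finset.prod_eq_zero_iff] at hx
  obtain ⟨i, -, hi⟩ := hx
  exact ⟨i, (sub_eq_zero.mp (by simpa using hi)).symm⟩

theorem aeval_eq_zero_of_map_eq_prod (hroots : f.map (algebraMap K L) = ∏ i, (X - C (a i)))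
    (i : ι) : aeval (a i) f = 0 := by
  rw [aeval_def, eval₂_eq_eval_map, hroots, eval_prod]
  exact Finset.prod_eq_zero (Finset.mem_univ i) (by simp)

theorem exists_perm_algEquiv_apply_eq (hroots : f.map (algebraMap K L) = ∏ i, (X - C (a i)))
    (ha : Function.Injective a) (g : L ≃ₐ[K] L) : ∃ π : Equiv.Perm ι, ∀ i, g (a i) = a (π i) := by
  choose p hp using fun i => exists_eq_of_aeval_eq_zero hroots (x := g (a i))
    (by rw [aeval_algHom_apply, aeval_eq_zero_of_map_eq_prod hroots, map_zero])
  have hp_inj : Function.Injective p := fun i j hij =>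
    ha (g.injective (by rw [← hp i, ← hp j, hij]))
  exact ⟨Equiv.ofBijective p hp_inj.bijective_of_finite, fun i => (hp i).symm⟩

end Roots

section PermutedEval

variable {K L ι : Type*} [CommSemiring K] [CommSemiring L] [Algebra K L]

/-- `e_a^F(σ) = F(a^σ)`, where `a^σ` has `i`-th entry `a (σ⁻¹ i)`. -/
noncomputable def permutedEval (F : MvPolynomial ι K) (a : ι → L) (σ : Equiv.Perm ι) : L :=
  MvPolynomial.aeval (fun i => a (σ⁻¹ i)) F

theorem permutedEval_mul_of_rename_eq {F : MvPolynomial ι K} {τ : Equiv.Perm ι}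
    (hF : MvPolynomial.rename τ F = F) (a : ι → L) (σ : Equiv.Perm ι) :
    permutedEval F a (τ * σ) = permutedEval F a σ := by
  have hF' : MvPolynomial.rename ⇑τ⁻¹ F = F := by
    conv_lhs => rw [← hF, MvPolynomial.rename_rename]
    simp
  conv_rhs => rw [permutedEval, ← hF', MvPolynomial.aeval_rename]
  rfl

theorem algHom_permutedEval (F : MvPolynomial ι K) {a : ι → L} {g : L →ₐ[K] L}
    {π : Equiv.Perm ι} (hπ : ∀ i, g (a i) = a (π i)) (σ : Equiv.Perm ι) :
    g (permutedEval F a σ) = permutedEval F a (σ * π⁻¹) := by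
  rw [permutedEval, MvPolynomial.comp_aeval_apply]
  simp only [hπ]
  rfl

end PermutedEval

theorem coeff_mem_range_of_forall_map_eq {K L : Type*} [Field K] [Field L] [Algebra K L]
    [IsGalois K L] {P : L[X]} (hP : ∀ g : L ≃ₐ[K] L, P.map (g : L →+* L) = P) (m : ℕ) :
    P.coeff m ∈ (algebraMap K L).range :=
  (InfiniteGalois.mem_range_algebraMap_iff_fixed _).mpr fun g => by
    conv_rhs => rw [← hP g]
    rw [coeff_map]
    rfl

theorem stmt4_general (K L : Type*) [Field K] [Field L] [Algebra K L]
    [IsGalois K L] (n : ℕ)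
    (f : Polynomial K) (hsep : f.Separable) (a : Fin n → L)
    (hroots : f.map (algebraMap K L) = ∏ i, (Polynomial.X - Polynomial.C (a i)))
    (G : Subgroup (Equiv.Perm (Fin n)))
    (hG : ∀ π : Equiv.Perm (Fin n),
      π ∈ G ↔ ∃ g : L ≃ₐ[K] L, ∀ i, g (a i) = a (π i))
    (T : Subgroup (Equiv.Perm (Fin n)))
    (F : MvPolynomial (Fin n) K)
    (hF : ∀ τ ∈ T, MvPolynomial.rename ⇑τ F = F)
    (σ₀ : Equiv.Perm (Fin n)) (R : Finset (Equiv.Perm (Fin n)))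
    (hR1 : ∀ r ∈ R, ∃ t ∈ T, ∃ g ∈ G, r = t * σ₀ * g)
    (hR2 : ∀ t ∈ T, ∀ g ∈ G, ∃! r, r ∈ R ∧ ∃ t' ∈ T, t * σ₀ * g = t' * r)
    (m : ℕ) :
    (∏ r ∈ R, (Polynomial.X - Polynomial.C
        (MvPolynomial.aeval (fun i => a (r⁻¹ i)) F))).coeff m
      ∈ (algebraMap K L).range := by
  have ha : Function.Injective a :=
    separable_prod_X_sub_C_iff.mp (hroots ▸ hsep.map)
  refine coeff_mem_range_of_forall_map_eq (fun g => ?_) m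
  obtain ⟨π, hπ⟩ := exists_perm_algEquiv_apply_eq hroots ha g
  have hπG : π⁻¹ ∈ G := inv_mem ((hG π).mpr ⟨g, hπ⟩)
  simp only [Polynomial.map_prod, Polynomial.map_sub, map_X, map_C]
  calc ∏ r ∈ R, (X - C (g (permutedEval F a r)))
      = ∏ r ∈ R, (X - C (permutedEval F a (r * π⁻¹))) :=
        Finset.prod_congr rfl fun r _ => congrArg (X - C ·)
          (algHom_permutedEval F (g := (g : L →ₐ[K] L)) hπ r)
    _ = ∏ r ∈ R, (X - C (permutedEval F a r)) :=
        prod_mul_right_eq_prod hR1 hR2 (fun s => X - C (permutedEval F a s))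
          (fun t ht s => by rw [permutedEval_mul_of_rename_eq (hF t ht)]) hπG

/-- The polynomial `Γ_{a,D}^F(X) = ∏_{σ ∈ T\D} (X − e_a^F(σ))` attached to a double
coset `D = Tσ₀G_a` has all its coefficients in `K`. Here `R` is a set of
representatives of the right `T`-cosets contained in `D`. -/
theorem stmt4 (K L : Type*) [Field K] [Field L] [Algebra K L]
    [FiniteDimensional K L] [IsGalois K L] (n : ℕ)
    (f : Polynomial K) (hsep : f.Separable) (a : Fin n → L)
    (hroots : f.map (algebraMap K L) = ∏ i, (Polynomial.X - Polynomial.C (a i)))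
    (hgen : Algebra.adjoin K (Set.range a) = ⊤)
    (G : Subgroup (Equiv.Perm (Fin n)))
    (hG : ∀ π : Equiv.Perm (Fin n),
      π ∈ G ↔ ∃ g : L ≃ₐ[K] L, ∀ i, g (a i) = a (π i))
    (T : Subgroup (Equiv.Perm (Fin n)))
    (F : MvPolynomial (Fin n) K)
    (hF : ∀ τ ∈ T, MvPolynomial.rename ⇑τ F = F)
    (σ₀ : Equiv.Perm (Fin n)) (R : Finset (Equiv.Perm (Fin n)))
    (hR1 : ∀ r ∈ R, ∃ t ∈ T, ∃ g ∈ G, r = t * σ₀ * g)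
    (hR2 : ∀ t ∈ T, ∀ g ∈ G, ∃! r, r ∈ R ∧ ∃ t' ∈ T, t * σ₀ * g = t' * r)
    (m : ℕ) :
    (∏ r ∈ R, (Polynomial.X - Polynomial.C
        (MvPolynomial.aeval (fun i => a (r⁻¹ i)) F))).coeff m
      ∈ (algebraMap K L).range :=
  stmt4_general K L n f hsep a hroots G hG T F hF σ₀ R hR1 hR2 m
end

section
/- Let a, b be orderings of the roots of a separable polynomial f in two splitting fields, F a T-invariant polynomial, and suppose the map e_a^F : T\S_n → K(a) is injective. Let φ: K(a) → K(b) be a K-isomorphism. Then for any double coset D ∈ T\S_n/G_a: Γ_{a,D}^F(F(b)) = 0 if and only if b = [φ(a_1),...,φ(a_n)]^σ for some σ ∈ D. -/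
/-- For two splitting fields with ordered roots `a`, `b`, a `T`-invariant `F` with
`e_a^F` injective on `T\Sₙ`, and a `K`-isomorphism `φ : K(a) → K(b)`:
`Γ_{a,D}^F(F(b)) = 0 ↔ b = φ(a)^σ for some σ ∈ D`. -/
theorem stmt6 (K L L' : Type*) [Field K] [Field L] [Algebra K L]
    [Field L'] [Algebra K L'] [FiniteDimensional K L] [IsGalois K L] (n : ℕ)
    (f : Polynomial K) (hsep : f.Separable)
    (a : Fin n → L) (b : Fin n → L')
    (hrootsa : f.map (algebraMap K L) = ∏ i, (Polynomial.X - Polynomial.C (a i)))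
    (hgena : Algebra.adjoin K (Set.range a) = ⊤)
    (hrootsb : f.map (algebraMap K L') = ∏ i, (Polynomial.X - Polynomial.C (b i)))
    (hgenb : Algebra.adjoin K (Set.range b) = ⊤)
    (G : Subgroup (Equiv.Perm (Fin n)))
    (hG : ∀ π : Equiv.Perm (Fin n),
      π ∈ G ↔ ∃ g : L ≃ₐ[K] L, ∀ i, g (a i) = a (π i))
    (T : Subgroup (Equiv.Perm (Fin n)))
    (F : MvPolynomial (Fin n) K)
    (hF : ∀ τ ∈ T, MvPolynomial.rename ⇑τ F = F)
    (hinj : ∀ σ σ' : Equiv.Perm (Fin n),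
      MvPolynomial.aeval (fun i => a (σ⁻¹ i)) F
        = MvPolynomial.aeval (fun i => a (σ'⁻¹ i)) F → ∃ t ∈ T, σ = t * σ')
    (φ : L ≃ₐ[K] L')
    (σ₀ : Equiv.Perm (Fin n)) (R : Finset (Equiv.Perm (Fin n)))
    (hR1 : ∀ r ∈ R, ∃ t ∈ T, ∃ g ∈ G, r = t * σ₀ * g)
    (hR2 : ∀ t ∈ T, ∀ g ∈ G, ∃! r, r ∈ R ∧ ∃ t' ∈ T, t * σ₀ * g = t' * r) :
    (∏ r ∈ R, (MvPolynomial.aeval b F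
        - φ (MvPolynomial.aeval (fun i => a (r⁻¹ i)) F))) = 0
      ↔ ∃ σ : Equiv.Perm (Fin n), (∃ t ∈ T, ∃ g ∈ G, σ = t * σ₀ * g)
          ∧ ∀ i, b i = φ (a (σ⁻¹ i)) := by
  have hφaeval : ∀ v : Fin n → L,
      φ (MvPolynomial.aeval v F) = MvPolynomial.aeval (fun i => φ (v i)) F := by
    intro v
    have := MvPolynomial.comp_aeval (f := v) (φ := φ.toAlgHom)
    exact congrFun (congrArg DFunLike.coe this) F
  constructor
  · intro hprod
    obtain ⟨r, hrR, hr0⟩ := Finset.prod_eq_zero_iff.mp hprod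
    have heq : MvPolynomial.aeval b F
        = φ (MvPolynomial.aeval (fun i => a (r⁻¹ i)) F) := sub_eq_zero.mp hr0
    have hmapa : f.map (algebraMap K L')
        = ∏ i, (Polynomial.X - Polynomial.C (φ (a i))) := by
      have h1 : (f.map (algebraMap K L)).map (φ : L →+* L') = f.map (algebraMap K L') := by
        rw [Polynomial.map_map]
        congr 1
        ext x
        simp
      rw [← h1, hrootsa, Polynomial.map_prod]
      simp
    have hbinj : Function.Injective b := by
      have : (f.map (algebraMap K L')).Separable := hsep.map
      rw [hrootsb] at this
      exact Polynomial.separable_prod_X_sub_C_iff.mp this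
    have hmult : (Finset.univ.val.map b) = (Finset.univ.val.map fun i => φ (a i)) := by
      have h1 : ((Finset.univ.val.map b).map fun x => Polynomial.X - Polynomial.C x).prod
          = ((Finset.univ.val.map fun i => φ (a i)).map
              fun x => Polynomial.X - Polynomial.C x).prod := by
        rw [Multiset.map_map, Multiset.map_map,
          ← Finset.prod_eq_multiset_prod, ← Finset.prod_eq_multiset_prod,
          Function.comp_def, Function.comp_def, ← hrootsb, hmapa]
      have h2 := congrArg Polynomial.roots h1
      rwa [Polynomial.roots_multiset_prod_X_sub_C, Polynomial.roots_multiset_prod_X_sub_C] at h2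
    have hex : ∀ i, ∃ j, φ (a j) = b i := by
      intro i
      have : b i ∈ Finset.univ.val.map b := Multiset.mem_map_of_mem b (Finset.mem_univ i)
      rw [hmult, Multiset.mem_map] at this
      obtain ⟨j, _, hj⟩ := this
      exact ⟨j, hj⟩
    choose j hj using hex
    have hjinj : Function.Injective j := by
      intro i i' h
      apply hbinj
      rw [← hj, ← hj, h]
    let p : Equiv.Perm (Fin n) := Equiv.ofBijective j (Finite.injective_iff_bijective.mp hjinj)
    have hp : ∀ i, b i = φ (a ((p⁻¹)⁻¹ i)) := by
      intro i
      rw [inv_inv]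
      exact (hj i).symm
    have haeq : MvPolynomial.aeval (fun i => a ((p⁻¹)⁻¹ i)) F
        = MvPolynomial.aeval (fun i => a (r⁻¹ i)) F := by
      apply φ.injective
      rw [hφaeval] at heq
      rw [hφaeval, hφaeval, ← heq]
      exact congrArg (fun v => MvPolynomial.aeval v F) (funext fun i => (hp i).symm)
    obtain ⟨t, htT, ht⟩ := hinj p⁻¹ r haeq
    obtain ⟨t₁, ht₁T, g, hgG, hr⟩ := hR1 r hrR
    refine ⟨p⁻¹, ⟨t * t₁, T.mul_mem htT ht₁T, g, hgG, ?_⟩, hp⟩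
    rw [ht, hr]
    group
  · rintro ⟨σ, ⟨t, htT, g, hgG, hσ⟩, hb⟩
    obtain ⟨r, ⟨hrR, t', ht'T, hrcos⟩, -⟩ := hR2 t htT g hgG
    apply Finset.prod_eq_zero hrR
    rw [sub_eq_zero]
    have hσr : σ = t' * r := by rw [hσ, hrcos]
    have h1 : MvPolynomial.aeval b F = φ (MvPolynomial.aeval (fun i => a (σ⁻¹ i)) F) := by
      rw [hφaeval]
      exact congrArg (fun v => MvPolynomial.aeval v F) (funext hb)
    rw [h1]
    congr 1
    have h2 : MvPolynomial.aeval (fun i => a (r⁻¹ i)) F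
        = MvPolynomial.aeval (fun i => a (r⁻¹ i)) (MvPolynomial.rename ⇑(t'⁻¹) F) := by
      rw [hF t'⁻¹ (T.inv_mem ht'T)]
    rw [h2, MvPolynomial.aeval_rename]
    refine congrArg (fun v => MvPolynomial.aeval v F) (funext fun i => ?_)
    simp [hσr, Function.comp, Equiv.Perm.mul_apply]
end

section
/- Let f ∈ K[x] be separable with roots a in a splitting field, and F a G_a-invariant polynomial such that e_a^F : G_a\S_n → K(a) is injective. If b = [b_1,...,b_n] is an ordering of the roots of f in another splitting field with F(b) = F(a) ∈ K, then the assignment a_i ↦ b_i extends to a K-isomorphism K(a) → K(b). -/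
/-!
Both `L` and `L'` are splitting fields of `f`, so there is some `K`-isomorphism `φ : L ≃ L'`, and
it permutes the roots: `φ (a i) = b (σ i)`. Applying `φ` to `F(a ∘ σ⁻¹)` gives `F(b) = c = F(a)`,
so injectivity of `e_a^F` puts `σ` in `G_a`. Composing `φ` with an automorphism of `L` realising
`σ⁻¹` on the roots yields an isomorphism sending `a i` to `b i`.
-/

open Polynomial

theorem Fintype.exists_perm_apply_eq_of_map_univ_eq {α β : Type*} [Fintype α]
    {f g : α → β} (h : Finset.univ.val.map f = Finset.univ.val.map g) :
    ∃ σ : Equiv.Perm α, ∀ i, f i = g (σ i) := by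
  classical
  have hfiber (c : β) : Fintype.card { i // f i = c } = Fintype.card { i // g i = c } := by
    simpa only [Multiset.count_map, Fintype.card_subtype, Finset.card_def, Finset.filter_val,
      eq_comm (a := c)] using congrArg (Multiset.count c) h
  exact ⟨Equiv.ofFiberEquiv fun c => Fintype.equivOfCardEq (hfiber c),
    fun i => (Equiv.ofFiberEquiv_map _ i).symm⟩

theorem Polynomial.roots_prod_univ_X_sub_C {R ι : Type*} [CommRing R] [IsDomain R] [Fintype ι]
    (a : ι → R) :
    (∏ i, (X - C (a i))).roots = Finset.univ.val.map a := by
  rw [← roots_multiset_prod_X_sub_C (Finset.univ.val.map a), Multiset.map_map]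
  rfl

section

variable {K L L' ι : Type*} [Field K] [Field L] [Algebra K L] [Field L'] [Algebra K L']
  [Fintype ι] {f : K[X]}

theorem Polynomial.isSplittingField_of_map_eq_prod {a : ι → L}
    (hroots : f.map (algebraMap K L) = ∏ i, (X - C (a i)))
    (hgen : Algebra.adjoin K (Set.range a) = ⊤) :
    f.IsSplittingField K L where
  splits' := hroots ▸ Splits.prod fun i _ => Splits.X_sub_C _
  adjoin_rootSet' := by
    classical
    rwa [rootSet, aroots, hroots, roots_prod_univ_X_sub_C, Multiset.toFinset_map,
      Finset.coe_image, Finset.univ.val_toFinset, Finset.coe_univ, Set.image_univ]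

theorem Polynomial.exists_algEquiv_apply_eq_perm {a : ι → L} {b : ι → L'}
    (hrootsa : f.map (algebraMap K L) = ∏ i, (X - C (a i)))
    (hgena : Algebra.adjoin K (Set.range a) = ⊤)
    (hrootsb : f.map (algebraMap K L') = ∏ i, (X - C (b i)))
    (hgenb : Algebra.adjoin K (Set.range b) = ⊤) :
    ∃ (φ : L ≃ₐ[K] L') (σ : Equiv.Perm ι), ∀ i, φ (a i) = b (σ i) := by
  have := isSplittingField_of_map_eq_prod hrootsa hgena
  have := isSplittingField_of_map_eq_prod hrootsb hgenb
  let φ : L ≃ₐ[K] L' :=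
    (IsSplittingField.algEquiv L f).trans (IsSplittingField.algEquiv L' f).symm
  have hprod : ∏ i, (X - C (φ (a i))) = ∏ i, (X - C (b i)) := by
    rw [← hrootsb, ← (φ : L →ₐ[K] L').comp_algebraMap, ← Polynomial.map_map, hrootsa,
      Polynomial.map_prod]
    simp
  obtain ⟨σ, hσ⟩ := Fintype.exists_perm_apply_eq_of_map_univ_eq (f := fun i => φ (a i)) (g := b)
    (by rw [← roots_prod_univ_X_sub_C, hprod, roots_prod_univ_X_sub_C])
  exact ⟨φ, σ, hσ⟩

end

theorem stmt7_general (K L L' : Type*) [Field K] [Field L] [Algebra K L]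
    [Field L'] [Algebra K L'] (n : ℕ)
    (f : Polynomial K)
    (a : Fin n → L) (b : Fin n → L')
    (hrootsa : f.map (algebraMap K L) = ∏ i, (Polynomial.X - Polynomial.C (a i)))
    (hgena : Algebra.adjoin K (Set.range a) = ⊤)
    (hrootsb : f.map (algebraMap K L') = ∏ i, (Polynomial.X - Polynomial.C (b i)))
    (hgenb : Algebra.adjoin K (Set.range b) = ⊤)
    (G : Subgroup (Equiv.Perm (Fin n)))
    (hG : ∀ π : Equiv.Perm (Fin n),
      π ∈ G ↔ ∃ g : L ≃ₐ[K] L, ∀ i, g (a i) = a (π i))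
    (F : MvPolynomial (Fin n) K)
    (hinj : ∀ σ σ' : Equiv.Perm (Fin n),
      MvPolynomial.aeval (fun i => a (σ⁻¹ i)) F
        = MvPolynomial.aeval (fun i => a (σ'⁻¹ i)) F → ∃ g ∈ G, σ = g * σ')
    (c : K)
    (hca : MvPolynomial.aeval a F = algebraMap K L c)
    (hcb : MvPolynomial.aeval b F = algebraMap K L' c) :
    ∃ ψ : L ≃ₐ[K] L', ∀ i, ψ (a i) = b i := by
  obtain ⟨φ, σ, hφ⟩ := exists_algEquiv_apply_eq_perm hrootsa hgena hrootsb hgenb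
  have hφσ : ∀ i, φ (a (σ⁻¹ i)) = b i := fun i => by simpa using hφ (σ⁻¹ i)
  have hFσ : MvPolynomial.aeval (fun i => a (σ⁻¹ i)) F = MvPolynomial.aeval a F :=
    φ.injective <| calc
      φ (MvPolynomial.aeval (fun i => a (σ⁻¹ i)) F)
          = MvPolynomial.aeval (fun i => φ (a (σ⁻¹ i))) F :=
        MvPolynomial.comp_aeval_apply (φ : L →ₐ[K] L') (f := fun i => a (σ⁻¹ i)) F
      _ = φ (MvPolynomial.aeval a F) := by simp only [hφσ, hcb, hca, AlgEquiv.commutes]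
  obtain ⟨g, hg, hσg⟩ := hinj σ 1 (by simpa using hFσ)
  obtain ⟨ψ, hψ⟩ := (hG σ⁻¹).mp (inv_mem (by rwa [hσg, mul_one]))
  exact ⟨ψ.trans φ, fun i => by rw [AlgEquiv.trans_apply, hψ, hφσ]⟩

/-- If `F` is a `G_a`-invariant (stabiliser exactly `G_a`) with `e_a^F` injective on
`G_a\Sₙ`, and `F(b) = F(a) ∈ K`, then `a_i ↦ b_i` defines a `K`-isomorphism
`K(a) → K(b)`. -/
theorem stmt7 (K L L' : Type*) [Field K] [Field L] [Algebra K L]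
    [Field L'] [Algebra K L'] [FiniteDimensional K L] [IsGalois K L] (n : ℕ)
    (f : Polynomial K) (hsep : f.Separable)
    (a : Fin n → L) (b : Fin n → L')
    (hrootsa : f.map (algebraMap K L) = ∏ i, (Polynomial.X - Polynomial.C (a i)))
    (hgena : Algebra.adjoin K (Set.range a) = ⊤)
    (hrootsb : f.map (algebraMap K L') = ∏ i, (Polynomial.X - Polynomial.C (b i)))
    (hgenb : Algebra.adjoin K (Set.range b) = ⊤)
    (G : Subgroup (Equiv.Perm (Fin n)))
    (hG : ∀ π : Equiv.Perm (Fin n),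
      π ∈ G ↔ ∃ g : L ≃ₐ[K] L, ∀ i, g (a i) = a (π i))
    (F : MvPolynomial (Fin n) K)
    (hstab : ∀ σ : Equiv.Perm (Fin n), MvPolynomial.rename ⇑σ F = F ↔ σ ∈ G)
    (hinj : ∀ σ σ' : Equiv.Perm (Fin n),
      MvPolynomial.aeval (fun i => a (σ⁻¹ i)) F
        = MvPolynomial.aeval (fun i => a (σ'⁻¹ i)) F → ∃ g ∈ G, σ = g * σ')
    (c : K)
    (hca : MvPolynomial.aeval a F = algebraMap K L c)
    (hcb : MvPolynomial.aeval b F = algebraMap K L' c) :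
    ∃ ψ : L ≃ₐ[K] L', ∀ i, ψ (a i) = b i :=
  stmt7_general K L L' n f a b hrootsa hgena hrootsb hgenb G hG F hinj c hca hcb
end

section
/- Let ξ ∈ S_n with centralizer Z_ξ, let F be a Z_ξ-invariant such that e_a^F : Z_ξ\S_n → K(a) is injective, and let Ψ ∈ G_a have cycle type ξ with σΨσ^{-1} = ξ. Then the polynomial Γ_{a,σ}^F(X) = ∏_{τ ∈ Z_ξ\Z_ξ σ G_a}(X − e_a^F(τ)) is irreducible over K and has degree equal to the size of the conjugacy class of Ψ in G_a. -/
/-- For `T = Z_ξ` the centraliser of `ξ`, a `Z_ξ`-invariant `F` with `e_a^F`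
injective on `Z_ξ\Sₙ`, and `Ψ ∈ G_a` with `σΨσ⁻¹ = ξ`, the polynomial
`Γ_{a,σ}^F(X) = ∏_{τ ∈ Z_ξ\Z_ξσG_a}(X − e_a^F(τ))` is irreducible over `K` and has
degree `|[Ψ]|`, the size of the `G_a`-conjugacy class of `Ψ`.
Here `R` is a set of representatives of the right `Z_ξ`-cosets in `Z_ξσG`. -/
theorem stmt12 (K L : Type*) [Field K] [Field L] [Algebra K L]
    [FiniteDimensional K L] [IsGalois K L] (n : ℕ)
    (f : Polynomial K) (hsep : f.Separable) (a : Fin n → L)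
    (hroots : f.map (algebraMap K L) = ∏ i, (Polynomial.X - Polynomial.C (a i)))
    (hgen : Algebra.adjoin K (Set.range a) = ⊤)
    (G : Subgroup (Equiv.Perm (Fin n)))
    (hG : ∀ π : Equiv.Perm (Fin n),
      π ∈ G ↔ ∃ g : L ≃ₐ[K] L, ∀ i, g (a i) = a (π i))
    (ξ : Equiv.Perm (Fin n))
    (F : MvPolynomial (Fin n) K)
    (hF : ∀ τ ∈ Subgroup.centralizer {ξ}, MvPolynomial.rename ⇑τ F = F)
    (hinj : ∀ σ σ' : Equiv.Perm (Fin n),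
      MvPolynomial.aeval (fun i => a (σ⁻¹ i)) F
        = MvPolynomial.aeval (fun i => a (σ'⁻¹ i)) F
      → ∃ t ∈ Subgroup.centralizer {ξ}, σ = t * σ')
    (Ψ : Equiv.Perm (Fin n)) (hΨ : Ψ ∈ G)
    (σ : Equiv.Perm (Fin n)) (hσ : σ * Ψ * σ⁻¹ = ξ)
    (R : Finset (Equiv.Perm (Fin n)))
    (hR1 : ∀ r ∈ R, ∃ t ∈ Subgroup.centralizer {ξ}, ∃ g ∈ G, r = t * σ * g)
    (hR2 : ∀ t ∈ Subgroup.centralizer ({ξ} : Set (Equiv.Perm (Fin n))), ∀ g ∈ G,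
      ∃! r, r ∈ R ∧ ∃ t' ∈ Subgroup.centralizer ({ξ} : Set (Equiv.Perm (Fin n))),
        t * σ * g = t' * r) :
    ∃ p : Polynomial K, Irreducible p
      ∧ p.map (algebraMap K L)
          = ∏ r ∈ R, (Polynomial.X - Polynomial.C
              (MvPolynomial.aeval (fun i => a (r⁻¹ i)) F))
      ∧ p.natDegree
          = Set.ncard {τ : Equiv.Perm (Fin n) | ∃ g ∈ G, g⁻¹ * Ψ * g = τ} := by
  classical
  open Polynomial in
  set Z := Subgroup.centralizer ({ξ} : Set (Equiv.Perm (Fin n))) with hZdef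
  set e : Equiv.Perm (Fin n) → L :=
    fun r => MvPolynomial.aeval (fun i => a (r⁻¹ i)) F with hedef
  -- left Z-invariance of e
  have eZ : ∀ t ∈ Z, ∀ r, e (t * r) = e r := by
    intro t ht r
    have h1 : MvPolynomial.rename ⇑t⁻¹ F = F := hF t⁻¹ (inv_mem ht)
    have hfun : (fun i => a ((t * r)⁻¹ i)) = ((fun i => a (r⁻¹ i)) ∘ ⇑t⁻¹) := by
      funext i
      simp [mul_inv_rev]
    have h2 : e (t * r)
        = MvPolynomial.aeval ((fun i => a (r⁻¹ i)) ∘ ⇑t⁻¹) F := by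
      simp only [hedef, hfun]
    rw [h2, ← MvPolynomial.aeval_rename, h1]
  -- uniqueness of representatives
  have repU : ∀ r ∈ R, ∀ r' ∈ R, (∃ t ∈ Z, r = t * r') → r = r' := by
    rintro r hr r' hr' ⟨t, ht, hrt⟩
    obtain ⟨t0, ht0, g0, hg0, hrep⟩ := hR1 r' hr'
    obtain ⟨r'', -, hu⟩ := hR2 t0 ht0 g0 hg0
    have h1 : r' = r'' := hu r' ⟨hr', 1, one_mem _, by rw [one_mul, ← hrep]⟩
    have h2 : r = r'' := hu r ⟨hr, t⁻¹, inv_mem ht, by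
      rw [← hrep, hrt, inv_mul_cancel_left]⟩
    rw [h2, h1]
  -- injectivity of e on R
  have einjR : ∀ r ∈ R, ∀ r' ∈ R, e r = e r' → r = r' := by
    intro r hr r' hr' hee
    obtain ⟨t, ht, hrt⟩ := hinj r r' hee
    exact repU r hr r' hr' ⟨t, ht, hrt⟩
  -- a is injective
  have ainj : Function.Injective a := by
    have hs : (f.map (algebraMap K L)).Separable := hsep.map
    rw [hroots] at hs
    exact Polynomial.separable_prod_X_sub_C_iff.mp hs
  -- each a i is a root of f (over L)
  have aroot : ∀ i, Polynomial.aeval (a i) f = 0 := by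
    intro i
    rw [Polynomial.aeval_def, ← Polynomial.eval_map, hroots, Polynomial.eval_prod]
    exact Finset.prod_eq_zero (Finset.mem_univ i) (by simp)
  -- every Galois automorphism induces a permutation in G
  have permOfGal : ∀ g : L ≃ₐ[K] L, ∃ π ∈ G, ∀ i, g (a i) = a (π i) := by
    intro g
    have hmem : ∀ i, ∃ j, g (a i) = a j := by
      intro i
      have h0 : Polynomial.aeval (g (a i)) f = 0 := by
        have h0' := Polynomial.aeval_algHom_apply g.toAlgHom (a i) f
        rw [aroot i, map_zero] at h0'
        exact h0'
      rw [Polynomial.aeval_def, ← Polynomial.eval_map, hroots, Polynomial.eval_prod] at h0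
      obtain ⟨j, -, hj⟩ := Finset.prod_eq_zero_iff.mp h0
      refine ⟨j, ?_⟩
      have := hj
      simp only [Polynomial.eval_sub, Polynomial.eval_X, Polynomial.eval_C, sub_eq_zero] at this
      exact this
    choose π₀ hπ₀ using hmem
    have hπinj : Function.Injective π₀ := by
      intro i j hij
      apply ainj
      apply g.injective
      rw [hπ₀ i, hπ₀ j, hij]
    let π : Equiv.Perm (Fin n) := Equiv.ofBijective π₀ (Finite.injective_iff_bijective.mp hπinj)
    have hπ : ∀ i, g (a i) = a (π i) := fun i => hπ₀ i
    exact ⟨π, (hG π).mpr ⟨g, hπ⟩, hπ⟩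
  -- action of a Galois automorphism on the values e r
  have gal_e : ∀ (g : L ≃ₐ[K] L) (π : Equiv.Perm (Fin n)), (∀ i, g (a i) = a (π i)) →
      ∀ r, g (e r) = e (r * π⁻¹) := by
    intro g π hπ r
    have h1 := MvPolynomial.comp_aeval_apply (f := fun i => a (r⁻¹ i)) g.toAlgHom F
    have hfun : (fun i => g (a (r⁻¹ i))) = (fun i => a ((r * π⁻¹)⁻¹ i)) := by
      funext i
      rw [hπ (r⁻¹ i)]
      have h5 : (r * π⁻¹)⁻¹ i = π (r⁻¹ i) := by simp [mul_inv_rev]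
      rw [h5]
    show g (MvPolynomial.aeval (fun i => a (r⁻¹ i)) F)
        = MvPolynomial.aeval (fun i => a ((r * π⁻¹)⁻¹ i)) F
    rw [← hfun]
    exact h1
  -- pushing a representative by an element of G stays in the coset space
  have rhoEx : ∀ π ∈ G, ∀ r ∈ R, ∃ r' ∈ R, ∃ t ∈ Z, r * π⁻¹ = t * r' := by
    intro π hπ r hr
    obtain ⟨t, ht, g, hg, rfl⟩ := hR1 r hr
    obtain ⟨r', ⟨hr', t', ht', heq⟩, -⟩ := hR2 t ht (g * π⁻¹) (mul_mem hg (inv_mem hπ))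
    refine ⟨r', hr', t', ht', ?_⟩
    rw [← heq]; group
  -- the product over R is invariant when twisting by π ∈ G
  have prod_inv : ∀ π ∈ G,
      (∏ r ∈ R, (Polynomial.X - Polynomial.C (e (r * π⁻¹))))
        = ∏ r ∈ R, (Polynomial.X - Polynomial.C (e r)) := by
    intro π hπ
    have hx : ∀ r ∈ R, ∃ r' ∈ R, e (r * π⁻¹) = e r' := by
      intro r hr
      obtain ⟨r', hr', t, ht, heq⟩ := rhoEx π hπ r hr
      exact ⟨r', hr', by rw [heq, eZ t ht]⟩
    choose ρ hρ using hx
    refine Finset.prod_bij ρ (fun r hr => (hρ r hr).1) ?_ ?_ ?_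
    · intro r₁ h₁ r₂ h₂ hchoose
      have e1 := (hρ r₁ h₁).2
      have e2 := (hρ r₂ h₂).2
      rw [hchoose] at e1
      have hee : e (r₁ * π⁻¹) = e (r₂ * π⁻¹) := by rw [e1, ← e2]
      obtain ⟨t, ht, hrt⟩ := hinj _ _ hee
      have : r₁ = t * r₂ := by
        have := mul_right_cancel (b := π⁻¹) (by rw [hrt]; group : r₁ * π⁻¹ = (t * r₂) * π⁻¹)
        exact this
      exact repU r₁ h₁ r₂ h₂ ⟨t, ht, this⟩
    · intro b hb
      obtain ⟨t, ht, g, hg, rfl⟩ := hR1 b hb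
      obtain ⟨r, ⟨hrR, t', ht', heq⟩, -⟩ := hR2 t ht (g * π) (mul_mem hg hπ)
      refine ⟨r, hrR, ?_⟩
      apply einjR _ ((hρ r hrR).1) _ hb
      rw [← (hρ r hrR).2]
      have hrval : r * π⁻¹ = t'⁻¹ * (t * σ * g) := by
        have : t * σ * (g * π) = t' * r := heq
        have h' : r = t'⁻¹ * (t * σ * g * π) := by
          rw [eq_inv_mul_iff_mul_eq, ← this]; group
        rw [h']; group
      rw [hrval, eZ t'⁻¹ (inv_mem ht')]
    · intro r hr
      rw [(hρ r hr).2]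
  -- the big product polynomial over L
  set P : Polynomial L := ∏ r ∈ R, (Polynomial.X - Polynomial.C (e r)) with hPdef
  have hPmonic : P.Monic :=
    Polynomial.monic_prod_of_monic _ _ (fun r _ => Polynomial.monic_X_sub_C _)
  -- P is fixed by every Galois automorphism
  have hPfix : ∀ g : L ≃ₐ[K] L, P.map (g : L →+* L) = P := by
    intro g
    obtain ⟨π, hπG, hπ⟩ := permOfGal g
    rw [hPdef, Polynomial.map_prod]
    simp only [Polynomial.map_sub, Polynomial.map_X, Polynomial.map_C]
    have : ∀ r ∈ R, (Polynomial.X - Polynomial.C ((g : L →+* L) (e r)))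
        = (Polynomial.X - Polynomial.C (e (r * π⁻¹))) := by
      intro r _
      rw [show (g : L →+* L) (e r) = g (e r) from rfl, gal_e g π hπ r]
    rw [Finset.prod_congr rfl this, prod_inv π hπG]
  -- hence the coefficients of P come from K
  have hcoeff : ∀ k, P.coeff k ∈ Set.range (algebraMap K L) := by
    intro k
    have hfix : ∀ g : L ≃ₐ[K] L, g (P.coeff k) = P.coeff k := by
      intro g
      have := congrArg (fun q => Polynomial.coeff q k) (hPfix g)
      simpa [Polynomial.coeff_map] using this
    have h3 : IntermediateField.fixedField (⊤ : Subgroup (L ≃ₐ[K] L)) = ⊥ :=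
      ((IsGalois.tfae (F := K) (E := L)).out 0 1).mp (inferInstance : IsGalois K L)
    have h2 : P.coeff k ∈ IntermediateField.fixedField (⊤ : Subgroup (L ≃ₐ[K] L)) :=
      fun g => hfix g.1
    rw [h3] at h2
    exact (IntermediateField.mem_bot).mp h2
  obtain ⟨p0, hp0⟩ : ∃ q : Polynomial K, q.map (algebraMap K L) = P :=
    (Polynomial.mem_lifts _).mp ((Polynomial.lifts_iff_coeff_lifts _).mpr hcoeff)
  -- a base point
  obtain ⟨r₀, ⟨hr₀R, t₀', ht₀', heq₀⟩, -⟩ := hR2 1 (one_mem _) 1 (one_mem _)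
  set α : L := e r₀ with hαdef
  have hint : IsIntegral K α := IsIntegral.of_finite K α
  -- every e r, r ∈ R, is a Galois conjugate of α, hence a root of minpoly K α
  have conjroot : ∀ r ∈ R, Polynomial.aeval (e r) (minpoly K α) = 0 := by
    intro r hr
    obtain ⟨t, ht, g, hg, hrval⟩ := hR1 r hr
    obtain ⟨tz, htz, gz, hgz, hr₀val⟩ := hR1 r₀ hr₀R
    set π : Equiv.Perm (Fin n) := g⁻¹ * gz with hπdef
    have hπG : π ∈ G := mul_mem (inv_mem hg) hgz
    obtain ⟨gl, hgl⟩ := (hG π).mp hπG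
    have h1 : gl α = e (r₀ * π⁻¹) := gal_e gl π hgl r₀
    have h2 : r₀ * π⁻¹ = (tz * t⁻¹) * r := by
      rw [hr₀val, hrval, hπdef]; group
    have h3 : gl α = e r := by
      rw [h1, h2, eZ (tz * t⁻¹) (mul_mem htz (inv_mem ht))]
    have h4 := Polynomial.aeval_algHom_apply gl.toAlgHom α (minpoly K α)
    rw [minpoly.aeval, map_zero] at h4
    rw [← h3]
    exact h4
  -- P divides the image of minpoly K α
  have hPdvd : P ∣ (minpoly K α).map (algebraMap K L) := by
    have hmapne : (minpoly K α).map (algebraMap K L) ≠ 0 :=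
      Polynomial.map_ne_zero (minpoly.ne_zero hint)
    set T : Finset L := R.image e with hTdef
    have hTP : ∏ x ∈ T, (Polynomial.X - Polynomial.C x) = P := by
      rw [hTdef]
      exact Finset.prod_image (fun x hx y hy hxy => einjR x hx y hy hxy)
    have hTle : T.val ≤ ((minpoly K α).map (algebraMap K L)).roots := by
      rw [Multiset.le_iff_subset T.nodup]
      intro x hx
      obtain ⟨r, hr, rfl⟩ := Finset.mem_image.mp hx
      rw [Polynomial.mem_roots hmapne]
      show Polynomial.eval (e r) ((minpoly K α).map (algebraMap K L)) = 0
      rw [Polynomial.eval_map, ← Polynomial.aeval_def]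
      exact conjroot r hr
    calc P = (T.val.map fun x => Polynomial.X - Polynomial.C x).prod := by
            rw [← hTP]; rfl
      _ ∣ (((minpoly K α).map (algebraMap K L)).roots.map
            fun x => Polynomial.X - Polynomial.C x).prod :=
          Multiset.prod_dvd_prod_of_le (Multiset.map_le_map hTle)
      _ ∣ (minpoly K α).map (algebraMap K L) :=
          Polynomial.prod_multiset_X_sub_C_dvd _
  -- minpoly divides p0
  have hmindvd : (minpoly K α).map (algebraMap K L) ∣ P := by
    rw [← hp0]
    apply Polynomial.map_dvd
    apply minpoly.dvd
    have : Polynomial.aeval α p0 = 0 := by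
      rw [Polynomial.aeval_def, ← Polynomial.eval_map, hp0, hPdef, Polynomial.eval_prod]
      exact Finset.prod_eq_zero hr₀R (by simp [hαdef])
    exact this
  have hmain : (minpoly K α).map (algebraMap K L) = P :=
    Polynomial.eq_of_monic_of_associated ((minpoly.monic hint).map _) hPmonic
      (associated_of_dvd_dvd hmindvd hPdvd)
  -- degree computation: natDegree = |R|
  have hdeg : (minpoly K α).natDegree = R.card := by
    have h1 : ((minpoly K α).map (algebraMap K L)).natDegree = (minpoly K α).natDegree :=
      Polynomial.natDegree_map _
    rw [← h1, hmain, hPdef,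
      Polynomial.natDegree_prod_of_monic _ _ (fun r _ => Polynomial.monic_X_sub_C _)]
    simp
  -- conjugacy class size = |R|
  have hΨval : Ψ = σ⁻¹ * ξ * σ := by rw [← hσ]; group
  have hclass : {τ : Equiv.Perm (Fin n) | ∃ g ∈ G, g⁻¹ * Ψ * g = τ}
      = ↑(R.image fun r => r⁻¹ * ξ * r) := by
    ext τ
    simp only [Set.mem_setOf_eq, Finset.coe_image, Set.mem_image, Finset.mem_coe]
    constructor
    · rintro ⟨g, hg, rfl⟩
      obtain ⟨r, ⟨hrR, t', ht', heq⟩, -⟩ := hR2 1 (one_mem _) g hg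
      refine ⟨r, hrR, ?_⟩
      have hr : r = t'⁻¹ * (σ * g) := by
        rw [eq_inv_mul_iff_mul_eq, ← heq]; group
      have hc : t' * ξ = ξ * t' := Subgroup.mem_centralizer_singleton_iff.mp ht'
      calc r⁻¹ * ξ * r = g⁻¹ * σ⁻¹ * (t' * ξ * t'⁻¹) * σ * g := by rw [hr]; group
        _ = g⁻¹ * Ψ * g := by
            rw [show t' * ξ * t'⁻¹ = ξ from by
              calc t' * ξ * t'⁻¹ = ξ * t' * t'⁻¹ := by rw [hc]
                _ = ξ := by group, hΨval]
            group
    · rintro ⟨r, hrR, rfl⟩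
      obtain ⟨t, ht, g, hg, rfl⟩ := hR1 r hrR
      refine ⟨g, hg, ?_⟩
      have hc : t * ξ = ξ * t := Subgroup.mem_centralizer_singleton_iff.mp ht
      have htconj : t⁻¹ * ξ * t = ξ := by
        calc t⁻¹ * ξ * t = t⁻¹ * (ξ * t) := by group
          _ = t⁻¹ * (t * ξ) := by rw [hc]
          _ = ξ := by group
      calc g⁻¹ * Ψ * g = g⁻¹ * σ⁻¹ * (t⁻¹ * ξ * t) * σ * g := by
            rw [hΨval, htconj]
            group
        _ = (t * σ * g)⁻¹ * ξ * (t * σ * g) := by group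
  have hcard : Set.ncard {τ : Equiv.Perm (Fin n) | ∃ g ∈ G, g⁻¹ * Ψ * g = τ} = R.card := by
    rw [hclass, Set.ncard_coe_finset]
    apply Finset.card_image_of_injOn
    intro r hr r' hr' hee
    have hZmem : r * r'⁻¹ ∈ Z := by
      rw [hZdef, Subgroup.mem_centralizer_singleton_iff]
      have : ξ * r = (r * r'⁻¹) * (ξ * r') := by
        have h := hee
        simp only at h
        calc ξ * r = r * (r⁻¹ * ξ * r) := by group
          _ = r * (r'⁻¹ * ξ * r') := by rw [h]
          _ = (r * r'⁻¹) * (ξ * r') := by group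
      calc (r * r'⁻¹) * ξ = ((r * r'⁻¹) * (ξ * r')) * r'⁻¹ := by group
        _ = (ξ * r) * r'⁻¹ := by rw [← this]
        _ = ξ * (r * r'⁻¹) := by group
    exact repU r hr r' hr' ⟨r * r'⁻¹, hZmem, by group⟩
  exact ⟨minpoly K α, minpoly.irreducible hint, by rw [hmain], by rw [hdeg, hcard]⟩
end

section
/- Let ξ ∈ S_n with centralizer Z_ξ, let F be a Z_ξ-invariant with e_a^F : Z_ξ\S_n → K(a) injective, and let Ψ, Ψ' ∈ G_a both have cycle type ξ, conjugated to ξ by σ, σ' ∈ S_n respectively. Then Γ_{a,σ}^F = Γ_{a,σ'}^F (as polynomials over K) if and only if Ψ and Ψ' are conjugate in G_a. -/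
set_option maxHeartbeats 1000000


/-- With `F` a `Z_ξ`-invariant and `e_a^F` injective on `Z_ξ\Sₙ`, and `Ψ, Ψ' ∈ G_a`
of cycle type `ξ` (via `σ, σ'`), one has `Γ_{a,σ}^F = Γ_{a,σ'}^F` if and only if `Ψ`
and `Ψ'` are conjugate in `G_a`. `R` and `R'` are right-coset representatives for
`Z_ξ\Z_ξσG` and `Z_ξ\Z_ξσ'G` respectively. -/
theorem stmt13 (K L : Type*) [Field K] [Field L] [Algebra K L]
    [FiniteDimensional K L] [IsGalois K L] (n : ℕ)
    (f : Polynomial K) (hsep : f.Separable) (a : Fin n → L)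
    (hroots : f.map (algebraMap K L) = ∏ i, (Polynomial.X - Polynomial.C (a i)))
    (hgen : Algebra.adjoin K (Set.range a) = ⊤)
    (G : Subgroup (Equiv.Perm (Fin n)))
    (hG : ∀ π : Equiv.Perm (Fin n),
      π ∈ G ↔ ∃ g : L ≃ₐ[K] L, ∀ i, g (a i) = a (π i))
    (ξ : Equiv.Perm (Fin n))
    (F : MvPolynomial (Fin n) K)
    (hF : ∀ τ ∈ Subgroup.centralizer {ξ}, MvPolynomial.rename ⇑τ F = F)
    (hinj : ∀ σ σ' : Equiv.Perm (Fin n),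
      MvPolynomial.aeval (fun i => a (σ⁻¹ i)) F
        = MvPolynomial.aeval (fun i => a (σ'⁻¹ i)) F
      → ∃ t ∈ Subgroup.centralizer {ξ}, σ = t * σ')
    (Ψ Ψ' : Equiv.Perm (Fin n)) (hΨ : Ψ ∈ G) (hΨ' : Ψ' ∈ G)
    (σ σ' : Equiv.Perm (Fin n)) (hσ : σ * Ψ * σ⁻¹ = ξ) (hσ' : σ' * Ψ' * σ'⁻¹ = ξ)
    (R R' : Finset (Equiv.Perm (Fin n)))
    (hR1 : ∀ r ∈ R, ∃ t ∈ Subgroup.centralizer {ξ}, ∃ g ∈ G, r = t * σ * g)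
    (hR2 : ∀ t ∈ Subgroup.centralizer ({ξ} : Set (Equiv.Perm (Fin n))), ∀ g ∈ G,
      ∃! r, r ∈ R ∧ ∃ t' ∈ Subgroup.centralizer ({ξ} : Set (Equiv.Perm (Fin n))),
        t * σ * g = t' * r)
    (hR1' : ∀ r ∈ R', ∃ t ∈ Subgroup.centralizer {ξ}, ∃ g ∈ G, r = t * σ' * g)
    (hR2' : ∀ t ∈ Subgroup.centralizer ({ξ} : Set (Equiv.Perm (Fin n))), ∀ g ∈ G,
      ∃! r, r ∈ R' ∧ ∃ t' ∈ Subgroup.centralizer ({ξ} : Set (Equiv.Perm (Fin n))),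
        t * σ' * g = t' * r) :
    (∏ r ∈ R, (Polynomial.X - Polynomial.C
        (MvPolynomial.aeval (fun i => a (r⁻¹ i)) F)))
      = (∏ r ∈ R', (Polynomial.X - Polynomial.C
          (MvPolynomial.aeval (fun i => a (r⁻¹ i)) F)))
      ↔ ∃ g ∈ G, g⁻¹ * Ψ * g = Ψ' := by
  classical
  obtain ⟨e, he⟩ : ∃ e : Equiv.Perm (Fin n) → L,
      ∀ s : Equiv.Perm (Fin n), e s = MvPolynomial.aeval (fun i => a (s⁻¹ i)) F :=
    ⟨_, fun _ => rfl⟩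
  simp only [← he]
  have hinv : ∀ t ∈ Subgroup.centralizer ({ξ} : Set (Equiv.Perm (Fin n))),
      ∀ s : Equiv.Perm (Fin n), e (t * s) = e s := by
    intro t ht s
    have ht' : t⁻¹ ∈ Subgroup.centralizer ({ξ} : Set (Equiv.Perm (Fin n))) := inv_mem ht
    have hfun : (fun i => a ((t * s)⁻¹ i))
        = ((fun i => a (s⁻¹ i)) ∘ ⇑(t⁻¹ : Equiv.Perm (Fin n))) := by
      funext i
      simp [mul_inv_rev, Equiv.Perm.mul_apply, Function.comp]
    rw [he, he, hfun, ← MvPolynomial.aeval_rename, hF t⁻¹ ht']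
  have hcomm : ∀ s ∈ Subgroup.centralizer ({ξ} : Set (Equiv.Perm (Fin n))),
      s⁻¹ * ξ * s = ξ := by
    intro s hs
    have h := (Subgroup.mem_centralizer_iff.mp hs) ξ (Set.mem_singleton ξ)
    calc s⁻¹ * ξ * s = s⁻¹ * (ξ * s) := by group
      _ = s⁻¹ * (s * ξ) := by rw [h]
      _ = ξ := by group
  have injkey : ∀ (R₀ : Finset (Equiv.Perm (Fin n))) (σ₀ : Equiv.Perm (Fin n)),
      (∀ r ∈ R₀, ∃ t ∈ Subgroup.centralizer ({ξ} : Set (Equiv.Perm (Fin n))),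
        ∃ g ∈ G, r = t * σ₀ * g) →
      (∀ t ∈ Subgroup.centralizer ({ξ} : Set (Equiv.Perm (Fin n))), ∀ g ∈ G,
        ∃! r, r ∈ R₀ ∧ ∃ t' ∈ Subgroup.centralizer ({ξ} : Set (Equiv.Perm (Fin n))),
          t * σ₀ * g = t' * r) →
      ∀ r₁ ∈ R₀, ∀ r₂ ∈ R₀, e r₁ = e r₂ → r₁ = r₂ := by
    intro R₀ σ₀ h1 h2 r₁ hr₁ r₂ hr₂ hee
    rw [he, he] at hee
    obtain ⟨t, ht, hr⟩ := hinj r₁ r₂ hee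
    obtain ⟨t₂, ht₂, g₂, hg₂, hr₂'⟩ := h1 r₂ hr₂
    obtain ⟨r, _, hun⟩ := h2 (t * t₂) (mul_mem ht ht₂) g₂ hg₂
    have e1 : r₁ = r := hun r₁ ⟨hr₁, 1, one_mem _, by rw [hr, hr₂']; group⟩
    have e2 : r₂ = r := hun r₂ ⟨hr₂, t, ht, by rw [hr₂']; group⟩
    rw [e1, e2]
  constructor
  · intro hprod
    obtain ⟨r₀, ⟨hr₀R, t₀, ht₀, hσr₀⟩, _⟩ := hR2 1 (one_mem _) 1 (one_mem _)
    have hone : (1 : Equiv.Perm (Fin n)) * σ * 1 = σ := by group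
    rw [hone] at hσr₀
    have hEσ : e σ = e r₀ := by rw [hσr₀, hinv t₀ ht₀]
    have hzero : Polynomial.eval (e σ) (∏ r ∈ R, (Polynomial.X - Polynomial.C (e r))) = 0 := by
      rw [Polynomial.eval_prod]
      apply Finset.prod_eq_zero hr₀R
      simp [hEσ]
    rw [hprod, Polynomial.eval_prod, Finset.prod_eq_zero_iff] at hzero
    obtain ⟨r', hr'R, hr'⟩ := hzero
    have hee : e σ = e r' := by simpa [sub_eq_zero] using hr'
    rw [he, he] at hee
    obtain ⟨t₂, ht₂, hσeq⟩ := hinj σ r' hee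
    obtain ⟨t, ht, g, hg, hr'eq⟩ := hR1' r' hr'R
    refine ⟨g⁻¹, inv_mem hg, ?_⟩
    have hΨeq : Ψ = σ⁻¹ * ξ * σ := by rw [← hσ]; group
    have hΨ'eq : Ψ' = σ'⁻¹ * ξ * σ' := by rw [← hσ']; group
    have hs : (t₂ * t)⁻¹ * ξ * (t₂ * t) = ξ := hcomm _ (mul_mem ht₂ ht)
    have hσform : σ = (t₂ * t) * σ' * g := by rw [hσeq, hr'eq]; group
    rw [hΨeq, hΨ'eq, hσform]
    have hgrp : (g⁻¹)⁻¹ * (((t₂*t)*σ'*g)⁻¹ * ξ * ((t₂*t)*σ'*g)) * g⁻¹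
        = σ'⁻¹ * ((t₂*t)⁻¹ * ξ * (t₂*t)) * σ' := by group
    rw [hgrp, hs]
  · rintro ⟨g₀, hg₀, hconj⟩
    have hΨeq : Ψ = σ⁻¹ * ξ * σ := by rw [← hσ]; group
    have h2 : σ' * (g₀⁻¹ * Ψ * g₀) * σ'⁻¹ = ξ := by rw [hconj]; exact hσ'
    rw [hΨeq] at h2
    have h4 : (σ * g₀ * σ'⁻¹)⁻¹ * ξ * (σ * g₀ * σ'⁻¹) = ξ := by
      have hx : (σ * g₀ * σ'⁻¹)⁻¹ * ξ * (σ * g₀ * σ'⁻¹)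
          = σ' * (g₀⁻¹ * (σ⁻¹ * ξ * σ) * g₀) * σ'⁻¹ := by group
      rw [hx, h2]
    have hu : σ * g₀ * σ'⁻¹ ∈ Subgroup.centralizer ({ξ} : Set (Equiv.Perm (Fin n))) := by
      apply Subgroup.mem_centralizer_iff.mpr
      intro h hh
      rw [Set.mem_singleton_iff] at hh
      rw [hh]
      calc ξ * (σ * g₀ * σ'⁻¹)
          = (σ * g₀ * σ'⁻¹) * ((σ * g₀ * σ'⁻¹)⁻¹ * ξ * (σ * g₀ * σ'⁻¹)) := by group
        _ = (σ * g₀ * σ'⁻¹) * ξ := by rw [h4]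
    have himeq : R.image e = R'.image e := by
      apply Finset.Subset.antisymm
      · intro y hy
        rw [Finset.mem_image] at hy ⊢
        obtain ⟨r, hrR, rfl⟩ := hy
        obtain ⟨t, ht, g, hg, hreq⟩ := hR1 r hrR
        obtain ⟨r', ⟨hr'R, t', ht', heq⟩, _⟩ :=
          hR2' (t * (σ * g₀ * σ'⁻¹)) (mul_mem ht hu) (g₀⁻¹ * g) (mul_mem (inv_mem hg₀) hg)
        refine ⟨r', hr'R, ?_⟩
        have hrw : t * (σ * g₀ * σ'⁻¹) * σ' * (g₀⁻¹ * g) = t * σ * g := by group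
        rw [hrw] at heq
        rw [← hreq] at heq
        rw [heq, hinv t' ht']
      · intro y hy
        rw [Finset.mem_image] at hy ⊢
        obtain ⟨r, hrR, rfl⟩ := hy
        obtain ⟨t, ht, g, hg, hreq⟩ := hR1' r hrR
        obtain ⟨r', ⟨hr'R, t', ht', heq⟩, _⟩ :=
          hR2 (t * (σ * g₀ * σ'⁻¹)⁻¹) (mul_mem ht (inv_mem hu)) (g₀ * g) (mul_mem hg₀ hg)
        refine ⟨r', hr'R, ?_⟩
        have hrw : t * (σ * g₀ * σ'⁻¹)⁻¹ * σ * (g₀ * g) = t * σ' * g := by group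
        rw [hrw] at heq
        rw [← hreq] at heq
        rw [heq, hinv t' ht']
    calc (∏ r ∈ R, (Polynomial.X - Polynomial.C (e r)))
        = ∏ y ∈ R.image e, (Polynomial.X - Polynomial.C y) :=
          (Finset.prod_image (f := fun y => Polynomial.X - Polynomial.C y)
            (injkey R σ hR1 hR2)).symm
      _ = ∏ y ∈ R'.image e, (Polynomial.X - Polynomial.C y) := by rw [himeq]
      _ = ∏ r ∈ R', (Polynomial.X - Polynomial.C (e r)) :=
          Finset.prod_image (f := fun y => Polynomial.X - Polynomial.C y)
            (injkey R' σ' hR1' hR2')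
end

section
/- Let ξ ∈ S_n, h ∈ K[x], and F(x_1,...,x_n) = ∑_j h(x_j) x_{ξ(j)}. Let Ψ ∈ G_a have cycle type ξ, say σΨσ^{-1} = ξ. Then ∏_{u ∈ Z_ξ\Z_ξσG_a}(X − F(a^u)) = ∏_{τ ∈ [Ψ]}(X − ∑_{j=1}^n h(a_j)·τ(a_j)), where [Ψ] is the G_a-conjugacy class of Ψ. In particular, for each τ = g^{-1}Ψg ∈ [Ψ], the set {u ∈ S_n : u^{-1}ξu = τ} is exactly the right coset Z_ξ σ g, giving a bijection between [Ψ] and Z_ξ\Z_ξσG_a. -/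
lemma coset_char {n : ℕ} (ξ Ψ σ : Equiv.Perm (Fin n)) (hσ : σ * Ψ * σ⁻¹ = ξ)
    (g u : Equiv.Perm (Fin n)) :
    u⁻¹ * ξ * u = g⁻¹ * Ψ * g ↔
      ∃ t ∈ Subgroup.centralizer ({ξ} : Set (Equiv.Perm (Fin n))), u = t * σ * g := by
  have hΨ' : Ψ = σ⁻¹ * ξ * σ := by rw [← hσ]; group
  constructor
  · intro hu
    refine ⟨u * g⁻¹ * σ⁻¹, ?_, by group⟩
    rw [Subgroup.mem_centralizer_iff]
    intro y hy
    have hy' : y = ξ := hy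
    rw [hy']
    have h1 : u⁻¹ * ξ * u = g⁻¹ * (σ⁻¹ * ξ * σ) * g := by rw [hu, hΨ']
    have h2 : ξ * u = u * (g⁻¹ * σ⁻¹ * ξ * σ * g) := by
      have := congrArg (u * ·) h1
      simp only [← mul_assoc] at this ⊢
      simpa [mul_assoc] using this
    calc ξ * (u * g⁻¹ * σ⁻¹) = (ξ * u) * g⁻¹ * σ⁻¹ := by group
      _ = (u * (g⁻¹ * σ⁻¹ * ξ * σ * g)) * g⁻¹ * σ⁻¹ := by rw [h2]
      _ = u * g⁻¹ * σ⁻¹ * ξ := by group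
  · rintro ⟨t, ht, rfl⟩
    rw [Subgroup.mem_centralizer_iff] at ht
    have hc : ξ * t = t * ξ := ht ξ rfl
    have h3 : t⁻¹ * ξ * t = ξ := by rw [mul_assoc, hc]; group
    calc (t * σ * g)⁻¹ * ξ * (t * σ * g) = g⁻¹ * σ⁻¹ * (t⁻¹ * ξ * t) * σ * g := by group
      _ = g⁻¹ * σ⁻¹ * ξ * σ * g := by rw [h3]
      _ = g⁻¹ * Ψ * g := by rw [hΨ']; group

lemma eval_F {K L : Type*} [Field K] [Field L] [Algebra K L] {n : ℕ}
    (a : Fin n → L) (ξ u : Equiv.Perm (Fin n)) (h : Polynomial K) :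
    (MvPolynomial.aeval (fun i => a (u⁻¹ i))
        (∑ j : Fin n, Polynomial.aeval (MvPolynomial.X j) h
          * (MvPolynomial.X (ξ j) : MvPolynomial (Fin n) K)))
      = ∑ j, Polynomial.aeval (a j) h * a ((u⁻¹ * ξ * u) j) := by
  rw [map_sum]
  refine (Fintype.sum_equiv u _ _ fun j => ?_).symm
  rw [map_mul, MvPolynomial.aeval_X, ← Polynomial.aeval_algHom_apply, MvPolynomial.aeval_X]
  simp [Equiv.Perm.mul_apply]

/-- For the directed-edges invariant `F = ∑_j h(x_j)x_{ξ(j)}` and `Ψ ∈ G_a` with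
`σΨσ⁻¹ = ξ`: `∏_{u ∈ Z_ξ\Z_ξσG_a}(X − F(a^u)) = ∏_{τ ∈ [Ψ]}(X − ∑_j h(a_j)a_{τ(j)})`;
moreover for each `g ∈ G`, `{u : u⁻¹ξu = g⁻¹Ψg}` is exactly the right coset `Z_ξσg`. -/
theorem stmt14 (K L : Type*) [Field K] [Field L] [Algebra K L] (n : ℕ)
    (f : Polynomial K) (hsep : f.Separable) (a : Fin n → L)
    (hroots : f.map (algebraMap K L) = ∏ i, (Polynomial.X - Polynomial.C (a i)))
    (ξ : Equiv.Perm (Fin n)) (h : Polynomial K)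
    (G : Subgroup (Equiv.Perm (Fin n)))
    (Ψ : Equiv.Perm (Fin n)) (hΨ : Ψ ∈ G)
    (σ : Equiv.Perm (Fin n)) (hσ : σ * Ψ * σ⁻¹ = ξ)
    (R : Finset (Equiv.Perm (Fin n)))
    (hR1 : ∀ r ∈ R, ∃ t ∈ Subgroup.centralizer {ξ}, ∃ g ∈ G, r = t * σ * g)
    (hR2 : ∀ t ∈ Subgroup.centralizer ({ξ} : Set (Equiv.Perm (Fin n))), ∀ g ∈ G,
      ∃! r, r ∈ R ∧ ∃ t' ∈ Subgroup.centralizer ({ξ} : Set (Equiv.Perm (Fin n))),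
        t * σ * g = t' * r)
    (Cl : Finset (Equiv.Perm (Fin n)))
    (hCl : ∀ τ, τ ∈ Cl ↔ ∃ g ∈ G, g⁻¹ * Ψ * g = τ) :
    (∏ u ∈ R, (Polynomial.X - Polynomial.C
        (MvPolynomial.aeval (fun i => a (u⁻¹ i))
          (∑ j : Fin n, Polynomial.aeval (MvPolynomial.X j) h
            * (MvPolynomial.X (ξ j) : MvPolynomial (Fin n) K)))))
      = (∏ τ ∈ Cl, (Polynomial.X - Polynomial.C
          (∑ j, Polynomial.aeval (a j) h * a (τ j))))
    ∧ ∀ g ∈ G, {u : Equiv.Perm (Fin n) | u⁻¹ * ξ * u = g⁻¹ * Ψ * g}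
        = {u | ∃ t ∈ Subgroup.centralizer ({ξ} : Set (Equiv.Perm (Fin n))),
            u = t * σ * g} := by
  constructor
  · refine Finset.prod_bij (fun u _ => u⁻¹ * ξ * u) ?_ ?_ ?_ ?_
    · intro u hu
      obtain ⟨t, ht, g, hg, rfl⟩ := hR1 u hu
      rw [hCl]
      exact ⟨g, hg, ((coset_char ξ Ψ σ hσ g _).mpr ⟨t, ht, rfl⟩).symm⟩
    · intro u₁ hu₁ u₂ hu₂ heq
      obtain ⟨t₁, ht₁, g₁, hg₁, rfl⟩ := hR1 u₁ hu₁
      have e1 : (t₁ * σ * g₁)⁻¹ * ξ * (t₁ * σ * g₁) = g₁⁻¹ * Ψ * g₁ :=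
        (coset_char ξ Ψ σ hσ g₁ _).mpr ⟨t₁, ht₁, rfl⟩
      have heq' : (t₁ * σ * g₁)⁻¹ * ξ * (t₁ * σ * g₁) = u₂⁻¹ * ξ * u₂ := heq
      have e2 : u₂⁻¹ * ξ * u₂ = g₁⁻¹ * Ψ * g₁ := by rw [← heq', e1]
      obtain ⟨t₂, ht₂, hu₂eq⟩ := (coset_char ξ Ψ σ hσ g₁ u₂).mp e2
      obtain ⟨r, _, hrU⟩ := hR2 t₁ ht₁ g₁ hg₁
      have k1 : t₁ * σ * g₁ = r := by
        exact (hrU _ ⟨hu₁, 1, one_mem _, (one_mul _).symm⟩)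
      have k2 : u₂ = r := by
        refine hrU _ ⟨hu₂, t₁ * t₂⁻¹, mul_mem ht₁ (inv_mem ht₂), ?_⟩
        rw [hu₂eq]; group
      rw [k1, k2]
    · intro τ hτ
      obtain ⟨g, hg, hgτ⟩ := (hCl τ).mp hτ
      obtain ⟨r, ⟨hrR, t', ht', hr'⟩, _⟩ := hR2 1 (one_mem _) g hg
      have hre : r = t'⁻¹ * σ * g := by
        rw [one_mul] at hr'
        rw [mul_assoc, hr']; group
      refine ⟨r, hrR, ?_⟩
      show r⁻¹ * ξ * r = τ
      rw [(coset_char ξ Ψ σ hσ g r).mpr ⟨t'⁻¹, inv_mem ht', hre⟩, hgτ]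
    · intro u hu
      rw [eval_F]
  · intro g _
    ext u
    exact coset_char ξ Ψ σ hσ g u
end

section
/- Let K be an infinite field, f ∈ K[t] separable of degree n with roots a_1,...,a_n in a splitting field L, and G = Gal(L/K). For h ∈ K[x] of degree < n, set v_h(σ) = ∑_{j=1}^n h(a_j)·σ(a_j). Then the K-linear maps E_σ : (K^n ≅ polynomials of degree < n) → L, h ↦ v_h(σ), are pairwise distinct for distinct σ ∈ G; consequently, the set of h ∈ K^n for which the values v_h(σ), σ ∈ G, are pairwise distinct is a nonempty Zariski-open (dense) subset of K^n. -/
/-- Over an infinite field `K`, for `h(x) = ∑ c_i x^i` of degree `< n` and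
`v_h(σ) = ∑_j h(a_j)σ(a_j)`, the linear maps `E_σ : h ↦ v_h(σ)` are pairwise distinct
for distinct `σ ∈ Gal(L/K)`; consequently the set of `h` with pairwise distinct
values `v_h(σ)` contains a nonempty Zariski-open set (the nonvanishing locus of a
nonzero polynomial), and in particular is nonempty. -/
theorem stmt17 (K L : Type*) [Field K] [Infinite K] [Field L] [Algebra K L]
    [FiniteDimensional K L] [IsGalois K L] (n : ℕ)
    (f : Polynomial K) (hsep : f.Separable) (a : Fin n → L)
    (hroots : f.map (algebraMap K L) = ∏ i, (Polynomial.X - Polynomial.C (a i)))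
    (hgen : Algebra.adjoin K (Set.range a) = ⊤) :
    (∀ σ τ : L ≃ₐ[K] L, σ ≠ τ → ∃ c : Fin n → K,
      (∑ j, (∑ i, algebraMap K L (c i) * a j ^ (i : ℕ)) * σ (a j))
        ≠ (∑ j, (∑ i, algebraMap K L (c i) * a j ^ (i : ℕ)) * τ (a j)))
    ∧ (∃ P : MvPolynomial (Fin n) K, P ≠ 0 ∧
        ∀ c : Fin n → K, MvPolynomial.eval c P ≠ 0 →
          ∀ σ τ : L ≃ₐ[K] L, σ ≠ τ →
            (∑ j, (∑ i, algebraMap K L (c i) * a j ^ (i : ℕ)) * σ (a j))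
              ≠ (∑ j, (∑ i, algebraMap K L (c i) * a j ^ (i : ℕ)) * τ (a j)))
    ∧ (∃ c : Fin n → K, ∀ σ τ : L ≃ₐ[K] L, σ ≠ τ →
        (∑ j, (∑ i, algebraMap K L (c i) * a j ^ (i : ℕ)) * σ (a j))
          ≠ (∑ j, (∑ i, algebraMap K L (c i) * a j ^ (i : ℕ)) * τ (a j))) := by
  classical
  -- the roots are pairwise distinct
  have hinj : Function.Injective a := by
    have hs : (f.map (algebraMap K L)).Separable := hsep.map
    rw [hroots] at hs
    exact Polynomial.separable_prod_X_sub_C_iff.mp hs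
  -- automorphisms agreeing on all roots are equal
  have hext : ∀ σ τ : L ≃ₐ[K] L, (∀ i, σ (a i) = τ (a i)) → σ = τ := by
    intro σ τ h
    have h2 : (σ : L →ₐ[K] L) = (τ : L →ₐ[K] L) := by
      apply AlgHom.ext_of_adjoin_eq_top hgen
      rintro x ⟨i, rfl⟩
      exact h i
    ext x
    exact DFunLike.congr_fun h2 x
  set w : (L ≃ₐ[K] L) → (L ≃ₐ[K] L) → Fin n → L :=
    fun σ τ i => ∑ j, a j ^ (i : ℕ) * (σ (a j) - τ (a j)) with hwdef
  -- the difference of the two sums is a linear combination of the `w`'s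
  have hD : ∀ (c : Fin n → K) (σ τ : L ≃ₐ[K] L),
      (∑ j, (∑ i, algebraMap K L (c i) * a j ^ (i : ℕ)) * σ (a j))
        - (∑ j, (∑ i, algebraMap K L (c i) * a j ^ (i : ℕ)) * τ (a j))
        = ∑ i, c i • w σ τ i := by
    intro c σ τ
    rw [← Finset.sum_sub_distrib]
    have step : ∀ j, (∑ i, algebraMap K L (c i) * a j ^ (i : ℕ)) * σ (a j)
        - (∑ i, algebraMap K L (c i) * a j ^ (i : ℕ)) * τ (a j)
        = ∑ i, c i • (a j ^ (i : ℕ) * (σ (a j) - τ (a j))) := by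
      intro j
      rw [← mul_sub, Finset.sum_mul]
      exact Finset.sum_congr rfl fun i _ => by rw [Algebra.smul_def]; ring
    simp_rw [step]
    rw [Finset.sum_comm]
    refine Finset.sum_congr rfl fun i _ => ?_
    rw [hwdef, Finset.smul_sum]
  -- the key nonvanishing: some w σ τ i is nonzero when σ ≠ τ
  have hkey : ∀ σ τ : L ≃ₐ[K] L, σ ≠ τ → ∃ i, w σ τ i ≠ 0 := by
    intro σ τ hστ
    obtain ⟨i0, hi0⟩ : ∃ i, σ (a i) ≠ τ (a i) := by
      by_contra hcon
      push_neg at hcon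
      exact hστ (hext σ τ hcon)
    by_contra hall
    push_neg at hall
    set h : Polynomial L := ∏ j ∈ Finset.univ.erase i0, (Polynomial.X - Polynomial.C (a j))
      with hhdef
    have hdeg : h.natDegree < n := by
      rw [hhdef, Polynomial.natDegree_prod _ _ (fun j _ => Polynomial.X_sub_C_ne_zero (a j))]
      simp only [Polynomial.natDegree_X_sub_C]
      rw [Finset.sum_const, smul_eq_mul, mul_one]
      calc (Finset.univ.erase i0).card < Finset.univ.card :=
            Finset.card_erase_lt_of_mem (Finset.mem_univ i0)
        _ = n := Finset.card_fin n
    have heval : ∀ x : L, h.eval x = ∑ i : Fin n, h.coeff i * x ^ (i : ℕ) := by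
      intro x
      rw [Polynomial.eval_eq_sum_range' hdeg]
      exact (Fin.sum_univ_eq_sum_range (fun i => h.coeff i * x ^ i) n).symm
    have hzero : ∑ j, h.eval (a j) * (σ (a j) - τ (a j)) = 0 := by
      have : ∑ j, h.eval (a j) * (σ (a j) - τ (a j))
          = ∑ i : Fin n, h.coeff i * w σ τ i := by
        simp_rw [heval, Finset.sum_mul, hwdef, Finset.mul_sum]
        rw [Finset.sum_comm]
        refine Finset.sum_congr rfl fun i _ => Finset.sum_congr rfl fun j _ => by ring
      rw [this]
      simp [hall]
    have hsingle : ∑ j, h.eval (a j) * (σ (a j) - τ (a j))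
        = h.eval (a i0) * (σ (a i0) - τ (a i0)) := by
      refine Finset.sum_eq_single i0 (fun j _ hj => ?_) (by simp)
      have : h.eval (a j) = 0 := by
        rw [hhdef, Polynomial.eval_prod]
        refine Finset.prod_eq_zero (Finset.mem_erase.mpr ⟨hj, Finset.mem_univ j⟩) ?_
        simp
      rw [this, zero_mul]
    rw [hsingle] at hzero
    have hne1 : h.eval (a i0) ≠ 0 := by
      rw [hhdef, Polynomial.eval_prod]
      refine Finset.prod_ne_zero_iff.mpr fun j hj => ?_
      simp only [Polynomial.eval_sub, Polynomial.eval_X, Polynomial.eval_C, sub_ne_zero]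
      exact fun he => (Finset.mem_erase.mp hj).1 (hinj he.symm)
    have hne2 : σ (a i0) - τ (a i0) ≠ 0 := sub_ne_zero.mpr hi0
    exact mul_ne_zero hne1 hne2 hzero
  -- Part 1
  have part1 : ∀ σ τ : L ≃ₐ[K] L, σ ≠ τ → ∃ c : Fin n → K,
      (∑ j, (∑ i, algebraMap K L (c i) * a j ^ (i : ℕ)) * σ (a j))
        ≠ (∑ j, (∑ i, algebraMap K L (c i) * a j ^ (i : ℕ)) * τ (a j)) := by
    intro σ τ hστ
    obtain ⟨i, hi⟩ := hkey σ τ hστ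
    refine ⟨(Pi.single i 1 : Fin n → K), fun heq => hi ?_⟩
    have := hD (Pi.single i 1) σ τ
    rw [heq, sub_self] at this
    have h2 : ∑ i', (Pi.single i 1 : Fin n → K) i' • w σ τ i' = w σ τ i := by
      rw [Finset.sum_eq_single i (fun j _ hj => by rw [Pi.single_eq_of_ne hj, zero_smul])
        (by simp)]
      rw [Pi.single_eq_same, one_smul]
    rw [h2] at this
    exact this.symm
  refine ⟨part1, ?_⟩
  -- Part 2: build the polynomial
  have hfrpos : 0 < Module.finrank K L := Module.finrank_pos
  set b := Module.finBasis K L with hbdef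
  have hcoord : ∀ σ τ : L ≃ₐ[K] L, σ ≠ τ →
      ∃ k : Fin (Module.finrank K L), ∃ i : Fin n, b.repr (w σ τ i) k ≠ 0 := by
    intro σ τ hστ
    obtain ⟨i, hi⟩ := hkey σ τ hστ
    by_contra hall
    push_neg at hall
    apply hi
    have : b.repr (w σ τ i) = 0 := Finsupp.ext fun k => hall k i
    exact b.repr.map_eq_zero_iff.mp this
  -- choice of coordinate for each pair
  let kk : (L ≃ₐ[K] L) → (L ≃ₐ[K] L) → Fin (Module.finrank K L) := fun σ τ =>
    if h : σ ≠ τ then (hcoord σ τ h).choose else ⟨0, hfrpos⟩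
  let ℓ : (L ≃ₐ[K] L) → (L ≃ₐ[K] L) → MvPolynomial (Fin n) K := fun σ τ =>
    ∑ i, MvPolynomial.C (b.repr (w σ τ i) (kk σ τ)) * MvPolynomial.X i
  have heval_ℓ : ∀ (c : Fin n → K) σ τ,
      MvPolynomial.eval c (ℓ σ τ) = ∑ i, b.repr (w σ τ i) (kk σ τ) * c i := by
    intro c σ τ
    simp [ℓ]
  have hℓne : ∀ σ τ : L ≃ₐ[K] L, σ ≠ τ → ℓ σ τ ≠ 0 := by
    intro σ τ hστ
    obtain ⟨i, hi⟩ := (hcoord σ τ hστ).choose_spec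
    have hkkeq : kk σ τ = (hcoord σ τ hστ).choose := dif_pos hστ
    intro h0
    apply hi
    have := heval_ℓ (Pi.single i 1) σ τ
    rw [h0, map_zero] at this
    rw [Finset.sum_eq_single i (fun j _ hj => by rw [Pi.single_eq_of_ne hj, mul_zero])
      (by simp)] at this
    rw [Pi.single_eq_same, mul_one] at this
    rw [← hkkeq]
    exact this.symm
  have hℓworks : ∀ (c : Fin n → K) (σ τ : L ≃ₐ[K] L), σ ≠ τ →
      MvPolynomial.eval c (ℓ σ τ) ≠ 0 →
      (∑ j, (∑ i, algebraMap K L (c i) * a j ^ (i : ℕ)) * σ (a j))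
        ≠ (∑ j, (∑ i, algebraMap K L (c i) * a j ^ (i : ℕ)) * τ (a j)) := by
    intro c σ τ hστ hev heq
    apply hev
    have hsum0 : ∑ i, c i • w σ τ i = 0 := by
      rw [← hD c σ τ, heq, sub_self]
    have : b.repr (∑ i, c i • w σ τ i) (kk σ τ) = 0 := by rw [hsum0, map_zero]; rfl
    rw [map_sum] at this
    rw [heval_ℓ]
    rw [Finsupp.finset_sum_apply] at this
    rw [← this]
    refine Finset.sum_congr rfl fun i _ => ?_
    rw [map_smul, Finsupp.smul_apply, smul_eq_mul]
    exact mul_comm _ _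
  set S : Finset ((L ≃ₐ[K] L) × (L ≃ₐ[K] L)) :=
    Finset.univ.filter (fun p => p.1 ≠ p.2) with hSdef
  set P : MvPolynomial (Fin n) K := ∏ p ∈ S, ℓ p.1 p.2 with hPdef
  have hPne : P ≠ 0 := by
    rw [hPdef]
    refine Finset.prod_ne_zero_iff.mpr fun p hp => ?_
    exact hℓne p.1 p.2 (Finset.mem_filter.mp hp).2
  have part2 : ∀ c : Fin n → K, MvPolynomial.eval c P ≠ 0 →
      ∀ σ τ : L ≃ₐ[K] L, σ ≠ τ →
        (∑ j, (∑ i, algebraMap K L (c i) * a j ^ (i : ℕ)) * σ (a j))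
          ≠ (∑ j, (∑ i, algebraMap K L (c i) * a j ^ (i : ℕ)) * τ (a j)) := by
    intro c hc σ τ hστ
    have hmem : (σ, τ) ∈ S := Finset.mem_filter.mpr ⟨Finset.mem_univ _, hστ⟩
    rw [hPdef, map_prod] at hc
    have := Finset.prod_ne_zero_iff.mp hc (σ, τ) hmem
    exact hℓworks c σ τ hστ this
  refine ⟨⟨P, hPne, part2⟩, ?_⟩
  -- Part 3: a nonzero polynomial over an infinite field has a nonvanishing point
  have : ∃ c : Fin n → K, MvPolynomial.eval c P ≠ 0 := by
    by_contra hall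
    push_neg at hall
    exact hPne (MvPolynomial.funext fun x => by rw [hall x, map_zero])
  obtain ⟨c, hc⟩ := this
  exact ⟨c, fun σ τ hστ => part2 c hc σ τ hστ⟩
end

section
/- Let K be an infinite field, f ∈ K[t] separable of degree n with roots a_1,...,a_n in a splitting field L. If F, G ∈ K[x_1,...,x_n] satisfy F(B(a_1),...,B(a_n)) = G(B(a_1),...,B(a_n)) for every polynomial B(t) = β_0 + β_1 t + ... + β_{n-1} t^{n-1} with β_i ∈ K, then F = G as polynomials. -/
open MvPolynomial

/-- Density lemma: a multivariate polynomial over `L` that vanishes at every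
point with coordinates in (the image of) an infinite subfield `K` is zero. -/
theorem dense_vanish (K L : Type*) [Field K] [Infinite K] [Field L] [Algebra K L] :
    ∀ (n : ℕ) (Q : MvPolynomial (Fin n) L),
      (∀ β : Fin n → K, eval (fun i => algebraMap K L (β i)) Q = 0) → Q = 0 := by
  intro n
  induction n with
  | zero =>
    intro Q h
    obtain ⟨c, rfl⟩ := MvPolynomial.C_surjective (Fin 0) Q
    have := h finZeroElim
    rw [eval_C] at this
    rw [this, map_zero]
  | succ n ih =>
    intro Q h
    apply (finSuccEquiv L n).injective
    simp only [map_zero]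
    ext k : 1
    rw [Polynomial.coeff_zero]
    apply ih
    intro β
    have h1 : ∀ y : K,
        Polynomial.eval (algebraMap K L y)
          (Polynomial.map (eval fun i => algebraMap K L (β i)) (finSuccEquiv L n Q)) = 0 := by
      intro y
      rw [← eval_eq_eval_mv_eval']
      have := h (Fin.cons y β)
      have hpt : (Fin.cons (algebraMap K L y) fun i => algebraMap K L (β i)) =
          (fun i => algebraMap K L ((Fin.cons y β : Fin (n+1) → K) i)) := by
        funext i
        refine Fin.cases ?_ (fun j => ?_) i <;> simp
      rw [hpt]
      exact this
    have h2 : Polynomial.map (eval fun i => algebraMap K L (β i)) (finSuccEquiv L n Q) = 0 := by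
      apply Polynomial.eq_zero_of_infinite_isRoot
      apply Set.Infinite.mono (s := Set.range (algebraMap K L))
      · rintro x ⟨y, rfl⟩; exact h1 y
      · exact Set.infinite_range_of_injective (algebraMap K L).injective
    have := congrArg (fun p => Polynomial.coeff p k) h2
    simpa using this

theorem eval_bind1 {R σ τ : Type*} [CommSemiring R] (x : τ → R)
    (g : σ → MvPolynomial τ R) (φ : MvPolynomial σ R) :
    MvPolynomial.eval x (MvPolynomial.bind₁ g φ)
      = MvPolynomial.eval (fun i => MvPolynomial.eval x (g i)) φ :=
  MvPolynomial.eval₂Hom_bind₁ _ _ _ _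

/-- Over an infinite field `K`, if two polynomials `F, G ∈ K[x₁,...,xₙ]` take the
same values on `(B(a₁),...,B(aₙ))` for every polynomial `B` of degree `< n` with
coefficients in `K`, then `F = G`. -/
theorem stmt18 (K L : Type*) [Field K] [Infinite K] [Field L] [Algebra K L] (n : ℕ)
    (f : Polynomial K) (hsep : f.Separable) (a : Fin n → L)
    (hroots : f.map (algebraMap K L) = ∏ i, (Polynomial.X - Polynomial.C (a i)))
    (F G : MvPolynomial (Fin n) K)
    (heq : ∀ β : Fin n → K,
      MvPolynomial.aeval (fun i => ∑ j, algebraMap K L (β j) * a i ^ (j : ℕ)) F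
        = MvPolynomial.aeval (fun i => ∑ j, algebraMap K L (β j) * a i ^ (j : ℕ)) G) :
    F = G := by
  classical
  -- the roots are pairwise distinct
  have hinj : Function.Injective a := by
    have : (∏ i, (Polynomial.X - Polynomial.C (a i))).Separable := by
      rw [← hroots]; exact hsep.map
    exact Polynomial.separable_prod_X_sub_C_iff.mp this
  -- Vandermonde matrix
  set M : Matrix (Fin n) (Fin n) L := Matrix.vandermonde a with hM
  have hdet : M.det ≠ 0 := Matrix.det_vandermonde_ne_zero_iff.mpr hinj
  have hMN : M * M⁻¹ = 1 := Matrix.mul_nonsing_inv M (isUnit_iff_ne_zero.mpr hdet)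
  -- the difference, base-changed to L
  set H : MvPolynomial (Fin n) L := MvPolynomial.map (algebraMap K L) (F - G) with hH
  -- the linear substitution
  set σ : Fin n → MvPolynomial (Fin n) L :=
    fun i => ∑ j : Fin n, MvPolynomial.C (a i ^ (j : ℕ)) * MvPolynomial.X j with hσ
  set Q : MvPolynomial (Fin n) L := MvPolynomial.bind₁ σ H with hQ
  -- Q vanishes on all K-points
  have hQ0 : Q = 0 := by
    apply dense_vanish K L n
    intro β
    rw [hQ, eval_bind1]
    have hpt : (fun i => MvPolynomial.eval (fun i => algebraMap K L (β i)) (σ i)) =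
        fun i => ∑ j, algebraMap K L (β j) * a i ^ (j : ℕ) := by
      funext i
      simp [hσ, mul_comm]
    rw [hpt, hH, MvPolynomial.eval_map, ← MvPolynomial.aeval_def, map_sub, heq β, sub_self]
  -- invert the substitution
  set τ : Fin n → MvPolynomial (Fin n) L :=
    fun j => ∑ k, MvPolynomial.C (M⁻¹ j k) * MvPolynomial.X k with hτ
  have key : ∀ i, MvPolynomial.bind₁ τ (σ i) = MvPolynomial.X i := by
    intro i
    calc MvPolynomial.bind₁ τ (σ i)
        = ∑ k, MvPolynomial.C ((M * M⁻¹) i k) * MvPolynomial.X k := by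
          rw [hσ]
          simp only [map_sum, map_mul, MvPolynomial.algHom_C,
            MvPolynomial.bind₁_X_right, hτ, Finset.mul_sum]
          rw [Finset.sum_comm]
          refine Finset.sum_congr rfl fun k _ => ?_
          rw [Matrix.mul_apply, map_sum, Finset.sum_mul]
          refine Finset.sum_congr rfl fun j _ => ?_
          rw [hM]
          simp [Matrix.vandermonde_apply, mul_assoc]
      _ = MvPolynomial.X i := by
          rw [hMN]
          simp [Matrix.one_apply, apply_ite MvPolynomial.C, Finset.sum_ite_eq]
  have hHQ : H = 0 := by
    have := congrArg (MvPolynomial.bind₁ τ) hQ0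
    rwa [hQ, MvPolynomial.bind₁_bind₁, map_zero,
      show (fun i => MvPolynomial.bind₁ τ (σ i)) = MvPolynomial.X from _root_.funext key,
      MvPolynomial.bind₁_X_left, AlgHom.id_apply] at this
  have : F - G = 0 := by
    have hin : Function.Injective (MvPolynomial.map (algebraMap K L) :
        MvPolynomial (Fin n) K → MvPolynomial (Fin n) L) :=
      MvPolynomial.map_injective _ (algebraMap K L).injective
    apply hin
    rw [map_zero]; exact hHQ
  exact sub_eq_zero.mp this
end

section
/- Euler-type criterion for general cubics: let K be a global field with char ≠ 2,3 (or Q), f(x) = x^3 + bx + c separable over the residue field F_q at a prime p not dividing 3b(4b^3+27c^2) (and not dividing the denominators of b, c), and let T = Tr_{F_q[x]/(f) / F_q}(x^{q+1}). Then: T ≡ −2b iff f has 3 roots in F_q; T ≡ b iff f is irreducible over F_q; and T is a root of X^3 − 3b^2 X − 2b^3 − 27c^2 iff f has exactly 1 root in F_q. -/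
/-!
Write `x` for the class of `X` in `A = F_q[X]/(f)`, so `T = Tr(x^(q+1))`. Reducing `x^(q+1)`
modulo `f` to `u + v x + w x²` gives `T = 3u - 2bw`.

* If `f` splits with distinct roots, then `f ∣ X^q - X`, so `x^q = x` and `T = Tr(x²) = -2b`.
* If `f` is irreducible, `A` is the field with `q³` elements and `T = αβ + βγ + γα` for the
  conjugates `α = x`, `β = α^q`, `γ = β^q`; since `α ≠ β` and `α + β + γ = Tr x = 0`, this is `b`.
* If `f = (X - r) g` with `g` an irreducible quadratic, then `x^(q+1)` is `r²` modulo `X - r`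
  and the norm `r² + b` of a root of `g` modulo `g`, which gives `T = 3r² + 2b`, a root of the
  resolvent `X³ - 3b²X - 2b³ - 27c²`.

The resolvent takes the value `-(4b³ + 27c²)` at both `-2b` and `b`, so the three possible
values of `T` are told apart as soon as `3b(4b³ + 27c²) ≠ 0`.
-/

open Polynomial

section Vieta

variable {R : Type*} [CommRing R] [NoZeroDivisors R] {s d b c α β γ : R}

theorem mul_eq_of_quadratic_roots_of_ne (hα : α ^ 2 + s * α + d = 0)
    (hβ : β ^ 2 + s * β + d = 0) (hne : α ≠ β) : α * β = d := by
  have : (α - β) * (α + β + s) = 0 := by linear_combination hα - hβ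
  have hsum := (mul_eq_zero.mp this).resolve_left (sub_ne_zero.mpr hne)
  linear_combination α * hsum - hα

theorem sum_mul_eq_of_cubic_roots_of_ne (hα : α ^ 3 + b * α + c = 0)
    (hβ : β ^ 3 + b * β + c = 0) (hne : α ≠ β) (hsum : α + β + γ = 0) :
    α * β + β * γ + γ * α = b := by
  have : (α - β) * (α ^ 2 + α * β + β ^ 2 + b) = 0 := by linear_combination hα - hβ
  have hquad := (mul_eq_zero.mp this).resolve_left (sub_ne_zero.mpr hne)
  linear_combination (α + β) * hsum - hquad

end Vieta

theorem Polynomial.card_roots_eq_three_or_irreducible_or_card_roots_eq_one {K : Type*} [Field K]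
    {f : K[X]} (hdeg : f.natDegree = 3) :
    Multiset.card f.roots = 3 ∨ Irreducible f ∨ Multiset.card f.roots = 1 := by
  obtain ⟨g, -, hcard, hg⟩ := exists_prod_multiset_X_sub_C_mul f
  have hg1 : g.natDegree ≠ 1 := fun h1 => by
    simpa [hg, h1] using splits_iff_card_roots.mp (Splits.of_natDegree_eq_one h1)
  rw [irreducible_iff_roots_eq_zero_of_degree_le_three (by omega) (by omega),
    ← Multiset.card_eq_zero]
  omega

theorem AdjoinRoot.trace_mk_eq_sum_coeff_modByMonic {R : Type*} [CommRing R] {f : R[X]}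
    (hf : f.Monic) (p : R[X]) :
    Algebra.trace R (AdjoinRoot f) (mk f p) =
      ∑ i ∈ Finset.range f.natDegree, (p * X ^ i %ₘ f).coeff i := by
  rw [Algebra.trace_eq_matrix_trace (powerBasis' hf).basis, Matrix.trace,
    ← Fin.sum_univ_eq_sum_range (fun i => (p * X ^ i %ₘ f).coeff i)]
  refine Finset.sum_congr rfl fun i _ => ?_
  rw [Matrix.diag, Algebra.leftMulMatrix_eq_repr_mul, PowerBasis.basis_eq_pow, powerBasis'_gen,
    ← mk_X, ← map_pow, ← map_mul]
  show (modByMonicHom hf _).coeff i = _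
  rw [modByMonicHom_mk]

namespace FiniteField

variable {K : Type*} [Field K] [Fintype K]

theorem aeval_pow_card {A : Type*} [CommSemiring A] [Algebra K A] (p : K[X]) (x : A) :
    aeval (x ^ Fintype.card K) p = aeval x p ^ Fintype.card K := by
  rw [← expand_aeval, expand_card, map_pow]

theorem dvd_X_pow_card_sub_X_of_splits {f : K[X]} (hsep : f.Separable) (hs : f.Splits) :
    f ∣ X ^ Fintype.card K - X := by
  refine hs.dvd_of_roots_le_roots hsep.ne_zero ?_
  rw [roots_X_pow_card_sub_X, Multiset.le_iff_subset (nodup_roots hsep)]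
  exact fun a _ => Finset.mem_univ_val a

theorem root_pow_card_ne_root {g : K[X]} (hg : Irreducible g) (hdeg : 2 ≤ g.natDegree) :
    AdjoinRoot.root g ^ Fintype.card K ≠ AdjoinRoot.root g := by
  intro h
  have hq : 1 < Fintype.card K := Fintype.one_lt_card
  have hsplits : (X ^ Fintype.card K - X : K[X]).Splits := by
    rw [splits_iff_card_roots, roots_X_pow_card_sub_X, X_pow_card_sub_X_natDegree_eq K hq]
    rfl
  have hdvd : g ∣ X ^ Fintype.card K - X := by
    rw [← AdjoinRoot.mk_eq_zero, map_sub, map_pow, AdjoinRoot.mk_X, h, sub_self]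
  have := (hsplits.of_dvd (X_pow_card_sub_X_ne_zero K hq) hdvd).natDegree_le_one_of_irreducible hg
  omega

theorem dvd_X_pow_card_succ_sub_C_of_irreducible {s d : K}
    (hg : Irreducible (X ^ 2 + C s * X + C d : K[X])) :
    X ^ 2 + C s * X + C d ∣ (X ^ (Fintype.card K + 1) - C d : K[X]) := by
  set g : K[X] := X ^ 2 + C s * X + C d
  have : Fact (Irreducible g) := ⟨hg⟩
  have hdeg : g.natDegree = 2 := by simp only [g]; compute_degree!
  set β := AdjoinRoot.root g
  have hβ : aeval β g = 0 := AdjoinRoot.aeval_eq g ▸ AdjoinRoot.mk_self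
  have hβq : aeval (β ^ Fintype.card K) g = 0 := by
    rw [aeval_pow_card, hβ, zero_pow Fintype.card_ne_zero]
  simp only [g, map_add, map_mul, map_pow, aeval_X, aeval_C] at hβ hβq
  have hnorm := mul_eq_of_quadratic_roots_of_ne hβq hβ (root_pow_card_ne_root hg (by omega))
  rw [← AdjoinRoot.mk_eq_zero, map_sub, map_pow, AdjoinRoot.mk_X, AdjoinRoot.mk_C, pow_succ,
    hnorm, AdjoinRoot.algebraMap_eq, sub_self]

end FiniteField

theorem Polynomial.monic_X_pow_three_add_C_mul_X_add_C {R : Type*} [CommRing R] (b c : R) :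
    (X ^ 3 + C b * X + C c : R[X]).Monic := by
  monicity!

theorem Polynomial.natDegree_X_pow_three_add_C_mul_X_add_C {R : Type*} [CommRing R]
    [Nontrivial R] (b c : R) : (X ^ 3 + C b * X + C c : R[X]).natDegree = 3 := by
  compute_degree!

namespace DepressedCubic

open AdjoinRoot

theorem trace_mk_quadratic {R : Type*} [CommRing R] [Nontrivial R] {b c : R} {f : R[X]}
    (hf : f = X ^ 3 + C b * X + C c) (u v w : R) :
    Algebra.trace R (AdjoinRoot f) (mk f (C u + C v * X + C w * X ^ 2)) = 3 * u - 2 * b * w := by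
  have hm : f.Monic := hf ▸ monic_X_pow_three_add_C_mul_X_add_C b c
  have hdeg : f.natDegree = 3 := hf ▸ natDegree_X_pow_three_add_C_mul_X_add_C b c
  have hmod : ∀ {p : R[X]} (r q : R[X]), p = r + f * q → r.degree < 3 → p %ₘ f = r :=
    fun r q hp hr => by
      rw [hp, add_modByMonic, self_mul_modByMonic hm, add_zero,
        (modByMonic_eq_self_iff hm).mpr (by rwa [degree_eq_natDegree hm.ne_zero, hdeg])]
  set p := C u + C v * X + C w * X ^ 2
  have h0 : p * X ^ 0 %ₘ f = p := hmod p 0 (by ring) (by simp only [p]; compute_degree!)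
  have h1 : p * X ^ 1 %ₘ f = C (-c * w) + C (u - b * w) * X + C v * X ^ 2 :=
    hmod _ (C w) (by subst hf; simp only [p, map_mul, map_sub, map_neg]; ring)
      (by compute_degree!)
  have h2 : p * X ^ 2 %ₘ f = C (-c * v) + C (-b * v - c * w) * X + C (u - b * w) * X ^ 2 :=
    hmod _ (C v + C w * X) (by subst hf; simp only [p, map_mul, map_sub, map_neg]; ring)
      (by compute_degree!)
  rw [trace_mk_eq_sum_coeff_modByMonic hm, hdeg, Finset.sum_range_succ, Finset.sum_range_succ,
    Finset.sum_range_one, h0, h1, h2]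
  simp only [p, coeff_add, coeff_C_mul_X_pow, coeff_C_mul_X, coeff_C]
  norm_num
  ring

variable {F : Type*} [Field F] [Fintype F] {b c : F} {f : F[X]}

theorem trace_root_pow_card_succ_of_card_roots_eq_three (hf : f = X ^ 3 + C b * X + C c)
    (hsep : f.Separable) (h3 : Multiset.card f.roots = 3) :
    Algebra.trace F (AdjoinRoot f) (root f ^ (Fintype.card F + 1)) = -2 * b := by
  have hs : f.Splits := by
    rw [splits_iff_card_roots, h3, hf, natDegree_X_pow_three_add_C_mul_X_add_C]
  have hfrob := FiniteField.dvd_X_pow_card_sub_X_of_splits hsep hs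
  rw [← mk_eq_zero, map_sub, map_pow, mk_X, sub_eq_zero] at hfrob
  have hpow : root f ^ (Fintype.card F + 1) = mk f (C 0 + C 0 * X + C 1 * X ^ 2) := by
    rw [pow_succ, hfrob, ← sq, ← mk_X, ← map_pow]
    simp
  rw [hpow, trace_mk_quadratic hf]
  ring

theorem trace_root_pow_card_succ_of_irreducible (hf : f = X ^ 3 + C b * X + C c)
    (hirr : Irreducible f) :
    Algebra.trace F (AdjoinRoot f) (root f ^ (Fintype.card F + 1)) = b := by
  have : Fact (Irreducible f) := ⟨hirr⟩
  have hm : f.Monic := hf ▸ monic_X_pow_three_add_C_mul_X_add_C b c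
  have hdeg : f.natDegree = 3 := hf ▸ natDegree_X_pow_three_add_C_mul_X_add_C b c
  have : Module.Finite F (AdjoinRoot f) := hm.finite_adjoinRoot
  have : Finite (AdjoinRoot f) := Module.finite_of_finite F
  have : Fintype (AdjoinRoot f) := Fintype.ofFinite _
  set q := Fintype.card F
  have hrank : Module.finrank F (AdjoinRoot f) = 3 := by
    rw [(powerBasis' hm).finrank, powerBasis'_dim, hdeg]
  have htrace (y : AdjoinRoot f) :
      algebraMap F _ (Algebra.trace F _ y) = y + y ^ q + (y ^ q) ^ q := by
    rw [FiniteField.algebraMap_trace_eq_sum_pow, hrank, Nat.card_eq_fintype_card]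
    simp only [Finset.sum_range_succ, Finset.sum_range_zero, zero_add, pow_zero, pow_one, sq,
      pow_mul, q]
  set α := root f
  set β := α ^ q
  set γ := β ^ q
  have hγ : γ ^ q = α := by
    have hcard : q * (q * q) = Fintype.card (AdjoinRoot f) := by
      rw [Module.card_eq_pow_finrank (K := F), hrank]
      ring
    rw [← pow_mul, ← pow_mul, hcard, FiniteField.pow_card]
  have hsum : α + β + γ = 0 := by
    have h := trace_mk_quadratic hf 0 1 0
    simp only [map_zero, map_one, one_mul, zero_mul, zero_add, add_zero, mk_X, mul_zero,
      sub_zero] at h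
    rw [← htrace, h, map_zero]
  have hα : aeval α f = 0 := aeval_eq f ▸ mk_self
  have hβ : aeval β f = 0 := by
    rw [FiniteField.aeval_pow_card, hα, zero_pow Fintype.card_ne_zero]
  simp only [hf, map_add, map_mul, map_pow, aeval_X, aeval_C] at hα hβ
  have hne : α ≠ β := (FiniteField.root_pow_card_ne_root hirr (by omega)).symm
  apply (algebraMap F (AdjoinRoot f)).injective
  rw [htrace, pow_succ, mul_pow, mul_pow, hγ, ← sum_mul_eq_of_cubic_roots_of_ne hα hβ hne hsum]
  ring

theorem trace_root_pow_card_succ_of_roots_eq_singleton (hf : f = X ^ 3 + C b * X + C c)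
    {r : F} (hr : f.roots = {r}) :
    Algebra.trace F (AdjoinRoot f) (root f ^ (Fintype.card F + 1)) = 3 * r ^ 2 + 2 * b := by
  have hm : f.Monic := hf ▸ monic_X_pow_three_add_C_mul_X_add_C b c
  have hr0 := isRoot_of_mem_roots (hr ▸ Multiset.mem_singleton_self r)
  simp only [hf, IsRoot, eval_add, eval_mul, eval_pow, eval_X, eval_C] at hr0
  set d := r ^ 2 + b
  set g : F[X] := X ^ 2 + C r * X + C d
  have hfg : f = (X - C r) * g := by
    rw [hf, show c = -r ^ 3 - b * r by linear_combination hr0]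
    simp only [g, d, map_add, map_sub, map_neg, map_mul, map_pow]
    ring
  have hg : g.roots = 0 := by
    have h := roots_mul (hfg ▸ hm.ne_zero)
    rw [← hfg, hr, roots_X_sub_C] at h
    simpa using congrArg Multiset.card h
  have hgdeg : g.natDegree = 2 := by simp only [g]; compute_degree!
  have hirr : Irreducible g :=
    (irreducible_iff_roots_eq_zero_of_degree_le_three (by omega) (by omega)).mpr hg
  obtain ⟨h, hh⟩ := FiniteField.dvd_X_pow_card_succ_sub_C_of_irreducible hirr
  set t := h.eval r
  have ht : r ^ 2 - d = g.eval r * t := by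
    have := congrArg (eval r) hh
    rwa [eval_sub, eval_pow, eval_X, eval_C, eval_mul, pow_succ, FiniteField.pow_card, ← sq]
      at this
  -- `X - C r ∣ h - C t`, so `X ^ (q + 1) ≡ C d + C t * g` modulo `f`
  have hpow : root f ^ (Fintype.card F + 1) =
      mk f (C (d + t * d) + C (t * r) * X + C t * X ^ 2) := by
    rw [← sub_eq_zero, ← mk_X, ← map_pow, ← map_sub, mk_eq_zero, hfg, mul_comm (X - C r)]
    have : X ^ (Fintype.card F + 1) - (C (d + t * d) + C (t * r) * X + C t * X ^ 2) =
        g * (h - C t) := by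
      rw [mul_sub, ← hh]
      simp only [g, map_add, map_mul]
      ring
    rw [this]
    exact mul_dvd_mul_left g X_sub_C_dvd_sub_C_eval
  rw [hpow, trace_mk_quadratic hf]
  simp only [g, eval_add, eval_mul, eval_pow, eval_X, eval_C, d] at ht
  linear_combination -ht

end DepressedCubic

/-- Euler-type criterion for cubics: for `f = x³ + bx + c` over the finite field
`F_q` with `3b(4b³+27c²) ≠ 0`, and `T = Tr_{F_q[x]/(f)/F_q}(x^{q+1})`:
`T = −2b` iff `f` has 3 roots in `F_q`; `T = b` iff `f` is irreducible; and
`T³ − 3b²T − 2b³ − 27c² = 0` iff `f` has exactly one root in `F_q`. -/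
theorem stmt19 (Fq : Type*) [Field Fq] [Fintype Fq] (b c : Fq)
    (f : Polynomial Fq)
    (hf : f = Polynomial.X ^ 3 + Polynomial.C b * Polynomial.X + Polynomial.C c)
    (hsep : f.Separable)
    (hcond : (3 : Fq) * b * (4 * b ^ 3 + 27 * c ^ 2) ≠ 0) :
    ((Algebra.trace Fq (AdjoinRoot f)
        (AdjoinRoot.root f ^ (Fintype.card Fq + 1)) = -2 * b)
      ↔ Multiset.card f.roots = 3)
    ∧ ((Algebra.trace Fq (AdjoinRoot f)
        (AdjoinRoot.root f ^ (Fintype.card Fq + 1)) = b)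
      ↔ Irreducible f)
    ∧ ((Algebra.trace Fq (AdjoinRoot f)
          (AdjoinRoot.root f ^ (Fintype.card Fq + 1)) ^ 3
        - 3 * b ^ 2 * Algebra.trace Fq (AdjoinRoot f)
            (AdjoinRoot.root f ^ (Fintype.card Fq + 1))
        - 2 * b ^ 3 - 27 * c ^ 2 = 0)
      ↔ Multiset.card f.roots = 1) := by
  have hcases := card_roots_eq_three_or_irreducible_or_card_roots_eq_one
    (hf ▸ natDegree_X_pow_three_add_C_mul_X_add_C b c)
  have hsplit := DepressedCubic.trace_root_pow_card_succ_of_card_roots_eq_three hf hsep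
  have hirr := DepressedCubic.trace_root_pow_card_succ_of_irreducible hf
  set T := Algebra.trace Fq (AdjoinRoot f) (AdjoinRoot.root f ^ (Fintype.card Fq + 1))
  have hone : Multiset.card f.roots = 1 → T ^ 3 - 3 * b ^ 2 * T - 2 * b ^ 3 - 27 * c ^ 2 = 0 := by
    rw [Multiset.card_eq_one]
    rintro ⟨r, hr⟩
    have hroot := isRoot_of_mem_roots (hr ▸ Multiset.mem_singleton_self r)
    simp only [hf, IsRoot, eval_add, eval_mul, eval_pow, eval_X, eval_C] at hroot
    rw [show T = _ from DepressedCubic.trace_root_pow_card_succ_of_roots_eq_singleton hf hr]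
    linear_combination 27 * (r ^ 3 + b * r - c) * hroot
  have h3b : (3 : Fq) * b ≠ 0 := left_ne_zero_of_mul hcond
  have hdisc : (4 : Fq) * b ^ 3 + 27 * c ^ 2 ≠ 0 := right_ne_zero_of_mul hcond
  have hne₁ : T = -2 * b → T ≠ b := fun h h' => h3b (by linear_combination h - h')
  have hne₂ : T = -2 * b → T ^ 3 - 3 * b ^ 2 * T - 2 * b ^ 3 - 27 * c ^ 2 ≠ 0 := fun h h' =>
    hdisc (by rw [h] at h'; linear_combination -h')
  have hne₃ : T = b → T ^ 3 - 3 * b ^ 2 * T - 2 * b ^ 3 - 27 * c ^ 2 ≠ 0 := fun h h' =>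
    hdisc (by rw [h] at h'; linear_combination -h')
  tauto
end
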